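/- arXiv:2408.03577 — 7 statements merged into one kernel-verified Lean document; each statement's English description precedes it below -/
import Mathlib

section
/- Let f = f_{a,δ,p} be a Hénon-form map (so δ ≠ 0 and deg p ≥ 2). Then there exists R₀ > 1 such that for every R ≥ R₀ there exists ρ > 1 such that f satisfies condition (A) for (R, ρ). -/
open Complex Filter Set Topology MeasureTheory Bornology

noncomputable section

/-- A Hénon-form map `f(x,y) = (y + a, p(y) - δ x)` with `δ ≠ 0` and `deg p ≥ 2`. -/
structure HenonMap : Type where
  a : ℂ
  δ : ℂ
  p : Polynomial ℂ
  hδ : δ ≠ 0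
  hdeg : 2 ≤ p.natDegree

namespace HenonMap

/-- The map itself. -/
def toFun (f : HenonMap) (z : ℂ × ℂ) : ℂ × ℂ :=
  (z.2 + f.a, f.p.eval z.2 - f.δ * z.1)

/-- The inverse map `f⁻¹(x,y) = (δ⁻¹ (p(x - a) - y), x - a)`. -/
def invFun (f : HenonMap) (z : ℂ × ℂ) : ℂ × ℂ :=
  (f.δ⁻¹ * (f.p.eval (z.1 - f.a) - z.2), z.1 - f.a)

end HenonMap

/-- `V_R⁺ = {(x,y) : max(R,|x|) < |y|}`. -/
def VPlus (R : ℝ) : Set (ℂ × ℂ) := {z | max R (‖z.1‖) < ‖z.2‖}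

/-- `V_R⁻ = {(x,y) : max(R,|y|) < |x|}`. -/
def VMinus (R : ℝ) : Set (ℂ × ℂ) := {z | max R (‖z.2‖) < ‖z.1‖}

/-- `D_R = {(x,y) : max(|x|,|y|) < R}`. -/
def DDisk (R : ℝ) : Set (ℂ × ℂ) := {z | max (‖z.1‖) (‖z.2‖) < R}

/-- Condition (A) for `(R, ρ)`. -/
def CondA (f : HenonMap) (R ρ : ℝ) : Prop :=
  (∀ z ∈ closure (VPlus R),
    f.toFun z ∈ VPlus R ∧ ρ * ‖z.2‖ < ‖(f.toFun z).2‖) ∧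
  (∀ z ∈ closure (VMinus R),
    f.invFun z ∈ VMinus R ∧ ρ * ‖z.1‖ < ‖(f.invFun z).1‖)

/-- A parameter-bounded family of Hénon-form maps. -/
def ParamBounded (Γ : Set HenonMap) : Prop :=
  ∃ (D : ℕ) (A d₀ Δ m M : ℝ),
    2 ≤ D ∧ 0 ≤ A ∧ 0 < d₀ ∧ d₀ ≤ Δ ∧ 0 < m ∧ m ≤ M ∧
    ∀ f ∈ Γ,
      f.p.natDegree ≤ D ∧ ‖f.a‖ ≤ A ∧
      d₀ ≤ ‖f.δ‖ ∧ ‖f.δ‖ ≤ Δ ∧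
      (∀ i : ℕ, ‖f.p.coeff i‖ ≤ M) ∧
      m ≤ ‖f.p.leadingCoeff‖

/-- Forward composition: `fwd γ n = γ_{n-1} ∘ ⋯ ∘ γ₀`. -/
def fwd (γ : ℤ → HenonMap) : ℕ → (ℂ × ℂ) → ℂ × ℂ
  | 0 => id
  | n + 1 => fun z => (γ (n : ℤ)).toFun (fwd γ n z)

/-- Backward composition: `bwd γ n = γ_{-n}⁻¹ ∘ ⋯ ∘ γ_{-1}⁻¹`. -/
def bwd (γ : ℤ → HenonMap) : ℕ → (ℂ × ℂ) → ℂ × ℂ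
  | 0 => id
  | n + 1 => fun z => (γ (-((n : ℤ) + 1))).invFun (bwd γ n z)

/-- `K_γ⁺` : points with bounded forward orbit. -/
def KPlus (γ : ℤ → HenonMap) : Set (ℂ × ℂ) :=
  {z | IsBounded (Set.range fun n : ℕ => fwd γ n z)}

/-- `K_γ⁻` : points with bounded backward orbit. -/
def KMinus (γ : ℤ → HenonMap) : Set (ℂ × ℂ) :=
  {z | IsBounded (Set.range fun n : ℕ => bwd γ n z)}

/-- `I_γ⁺` : points whose forward orbit tends to infinity in norm. -/
def IPlus (γ : ℤ → HenonMap) : Set (ℂ × ℂ) :=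
  {z | Tendsto (fun n : ℕ => ‖fwd γ n z‖) atTop atTop}

/-- `I_γ⁻` : points whose backward orbit tends to infinity in norm. -/
def IMinus (γ : ℤ → HenonMap) : Set (ℂ × ℂ) :=
  {z | Tendsto (fun n : ℕ => ‖bwd γ n z‖) atTop atTop}

/-- The iterated shift: `(σⁿ γ)_j = γ_{j+n}`. -/
def shiftIter (γ : ℤ → HenonMap) (n : ℕ) : ℤ → HenonMap := fun j => γ (j + n)

/-- `log⁺ t = max (log t) 0`. -/
def logPlus (t : ℝ) : ℝ := max (Real.log t) 0

/-- `G_{γ,n}⁺(z) = (deg γ_{n-1} ⋯ deg γ₀)⁻¹ log⁺ ‖γ_{n-1} ∘ ⋯ ∘ γ₀ (z)‖`. -/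
def GPlusN (γ : ℤ → HenonMap) (n : ℕ) (z : ℂ × ℂ) : ℝ :=
  (∏ j ∈ Finset.range n, ((γ (j : ℤ)).p.natDegree : ℝ))⁻¹ * logPlus ‖fwd γ n z‖

/-- `G_{γ,n}⁻(z) = (deg γ_{-1} ⋯ deg γ_{-n})⁻¹ log⁺ ‖γ_{-n}⁻¹ ∘ ⋯ ∘ γ_{-1}⁻¹ (z)‖`. -/
def GMinusN (γ : ℤ → HenonMap) (n : ℕ) (z : ℂ × ℂ) : ℝ :=
  (∏ j ∈ Finset.range n, ((γ (-((j : ℤ) + 1))).p.natDegree : ℝ))⁻¹ * logPlus ‖bwd γ n z‖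

/-!
For `‖w‖` large a polynomial of degree at least two beats every linear function, `‖p w‖ ≥ L ‖w‖`.
On `closure V_R⁺` the new second coordinate `p(y) - δ x` is then dominated by `p(y)`, since
`‖δ x‖ ≤ ‖δ‖ ‖y‖`, so it exceeds `3 ‖y‖`; this is more than both `R` and the new first coordinate
`‖y + a‖ ≤ 2 ‖y‖` once `R ≥ ‖a‖`. On `closure V_R⁻` the same argument applies to `δ⁻¹ (p(x - a) - y)`,
using `‖x - a‖ ≥ ‖x‖ / 2` once `R ≥ 2 ‖a‖`. So for all large `R` condition (A) holds with `ρ = 2`.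
-/

theorem Filter.Eventually.atTop_forall_le_norm {E : Type*} [SeminormedAddGroup E] {P : E → Prop}
    (h : ∀ᶠ x in cobounded E, P x) : ∀ᶠ R in atTop, ∀ x, R ≤ ‖x‖ → P x := by
  obtain ⟨T, -, hT⟩ := hasBasis_cobounded_norm.eventually_iff.1 h
  exact eventually_atTop.2 ⟨T, fun R hR x hx => hT (hR.trans hx)⟩

theorem Polynomial.eventually_mul_norm_le_norm_eval {𝕜 : Type*} [NormedField 𝕜] (p : Polynomial 𝕜)
    (hp : 2 ≤ p.natDegree) (L : ℝ) : ∀ᶠ w in cobounded 𝕜, L * ‖w‖ ≤ ‖p.eval w‖ := by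
  -- `p = divX p * X + p(0)` and `divX p`, of positive degree, tends to infinity in norm.
  have hdivX : 0 < p.divX.degree := by
    rw [← natDegree_pos_iff_degree_pos, natDegree_divX_eq_natDegree_tsub_one]
    omega
  have hlarge : ∀ᶠ w in cobounded 𝕜, L + 1 ≤ ‖p.divX.eval w‖ :=
    (p.divX.tendsto_norm_atTop hdivX tendsto_norm_cobounded_atTop).eventually_ge_atTop _
  filter_upwards [hlarge, eventually_cobounded_le_norm ‖p.coeff 0‖] with w hq hc
  have hsplit : p.eval w = p.divX.eval w * w + p.coeff 0 := by
    conv_lhs => rw [← divX_mul_X_add p]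
    simp
  calc L * ‖w‖ = (L + 1) * ‖w‖ - ‖w‖ := by ring
    _ ≤ ‖p.divX.eval w * w‖ - ‖p.coeff 0‖ := by
      rw [norm_mul]
      gcongr
    _ ≤ ‖p.eval w‖ := hsplit ▸ norm_sub_le_norm_add _ _

namespace HenonMap

variable (f : HenonMap) {R : ℝ}

theorem toFun_mem_VPlus (hR : 0 < R) (ha : ‖f.a‖ ≤ R)
    (hp : ∀ w : ℂ, R ≤ ‖w‖ → (‖f.δ‖ + 3) * ‖w‖ ≤ ‖f.p.eval w‖)
    {z : ℂ × ℂ} (hz : z ∈ closure (VPlus R)) :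
    f.toFun z ∈ VPlus R ∧ 2 * ‖z.2‖ < ‖(f.toFun z).2‖ := by
  obtain ⟨hRy, hxy⟩ : R ≤ ‖z.2‖ ∧ ‖z.1‖ ≤ ‖z.2‖ :=
    max_le_iff.1 (closure_lt_subset_le (by fun_prop) (by fun_prop) hz)
  have hgrowth : 3 * ‖z.2‖ ≤ ‖f.p.eval z.2 - f.δ * z.1‖ :=
    calc 3 * ‖z.2‖ = (‖f.δ‖ + 3) * ‖z.2‖ - ‖f.δ‖ * ‖z.2‖ := by ring
      _ ≤ ‖f.p.eval z.2‖ - ‖f.δ * z.1‖ := by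
        rw [norm_mul]
        gcongr
        exact hp _ hRy
      _ ≤ ‖f.p.eval z.2 - f.δ * z.1‖ := norm_sub_norm_le _ _
  have hfst : ‖z.2 + f.a‖ ≤ 2 * ‖z.2‖ := (norm_add_le _ _).trans (by linarith)
  refine ⟨?_, by simp only [toFun]; linarith⟩
  simp only [VPlus, toFun, mem_ofPred_eq]
  exact max_lt (by linarith) (by linarith)

theorem invFun_mem_VMinus (hR : 0 < R) (ha : ‖f.a‖ ≤ R / 2)
    (hp : ∀ w : ℂ, R / 2 ≤ ‖w‖ → (6 * ‖f.δ‖ + 2) * ‖w‖ ≤ ‖f.p.eval w‖)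
    {z : ℂ × ℂ} (hz : z ∈ closure (VMinus R)) :
    f.invFun z ∈ VMinus R ∧ 2 * ‖z.1‖ < ‖(f.invFun z).1‖ := by
  obtain ⟨hRx, hyx⟩ : R ≤ ‖z.1‖ ∧ ‖z.2‖ ≤ ‖z.1‖ :=
    max_le_iff.1 (closure_lt_subset_le (by fun_prop) (by fun_prop) hz)
  have hshift : ‖z.1‖ / 2 ≤ ‖z.1 - f.a‖ := by linarith [norm_sub_norm_le z.1 f.a]
  have hgrowth : 3 * ‖z.1‖ ≤ ‖f.δ⁻¹ * (f.p.eval (z.1 - f.a) - z.2)‖ := by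
    rw [norm_mul, norm_inv, inv_mul_eq_div, le_div_iff₀ (norm_pos_iff.2 f.hδ)]
    calc 3 * ‖z.1‖ * ‖f.δ‖ = (6 * ‖f.δ‖ + 2) * (‖z.1‖ / 2) - ‖z.1‖ := by ring
      _ ≤ ‖f.p.eval (z.1 - f.a)‖ - ‖z.2‖ := by
        gcongr
        exact (mul_le_mul_of_nonneg_left hshift (by positivity)).trans (hp _ (by linarith))
      _ ≤ ‖f.p.eval (z.1 - f.a) - z.2‖ := norm_sub_norm_le _ _
  have hsnd : ‖z.1 - f.a‖ ≤ 2 * ‖z.1‖ := (norm_sub_le _ _).trans (by linarith)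
  refine ⟨?_, by simp only [invFun]; linarith⟩
  simp only [VMinus, invFun, mem_ofPred_eq]
  exact max_lt (by linarith) (by linarith)

end HenonMap

/-- every Hénon-form map satisfies condition (A) for `(R, ρ)` for some
`ρ > 1`, for every sufficiently large `R`. -/
theorem stmt_0 (f : HenonMap) :
    ∃ R₀ : ℝ, 1 < R₀ ∧ ∀ R : ℝ, R₀ ≤ R → ∃ ρ : ℝ, 1 < ρ ∧ CondA f R ρ := by
  have hcondA : ∀ᶠ R in atTop, CondA f R 2 := by
    filter_upwards [eventually_gt_atTop 0, eventually_ge_atTop (2 * ‖f.a‖),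
      (f.p.eventually_mul_norm_le_norm_eval f.hdeg (‖f.δ‖ + 3)).atTop_forall_le_norm,
      (tendsto_id.atTop_div_const two_pos).eventually
        (f.p.eventually_mul_norm_le_norm_eval f.hdeg (6 * ‖f.δ‖ + 2)).atTop_forall_le_norm]
      with R hR ha hgrowth₁ hgrowth₂
    exact ⟨fun z => f.toFun_mem_VPlus hR (by linarith [norm_nonneg f.a]) hgrowth₁,
      fun z => f.invFun_mem_VMinus hR (by linarith) hgrowth₂⟩
  obtain ⟨R₀, hR₀⟩ := eventually_atTop.1 hcondA
  exact ⟨max R₀ 2, lt_max_of_lt_right one_lt_two,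
    fun R hR => ⟨2, one_lt_two, hR₀ R (le_of_max_le_left hR)⟩⟩
end
end

section
/- Let Γ be a nonempty parameter-bounded family of Hénon-form maps. Then there exists R₀ > 1 such that for every R ≥ R₀ there exists ρ > 1 such that every g ∈ Γ satisfies condition (A) for (R, ρ). -/
open Complex Filter Set Topology MeasureTheory Bornology

noncomputable section

/-!
A Hénon map is dominated, far from the origin, by the leading term of its polynomial.
If the degree, the coefficients, `|a|`, `|δ|` are bounded above and the leading coefficient is
bounded below, then `|p(y)| ≥ |y| (m|y| - MD)` for `|y| ≥ 1`, uniformly over the family. On the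
closed cone `|x| ≤ |y|, |y| ≥ R` this makes `|p(y) - δx|` at least `3|y|` once `R` is large, which
beats both `R` and `|y + a|`; on `|y| ≤ |x|, |x| ≥ R` the same bound applied at `x - a`, with
`|x - a| ≥ |x|/2`, gives `|δ⁻¹(p(x - a) - y)| ≥ 3|x|`. So `ρ = 2` works for every `R` beyond an
explicit radius.
-/

namespace Polynomial

variable {𝕜 : Type*} [NormedField 𝕜] {p : 𝕜[X]} {D : ℕ} {m M : ℝ} {y : 𝕜}

theorem sub_le_norm_eval_of_norm_coeff_le (hM : ∀ i, ‖p.coeff i‖ ≤ M)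
    (hlc : m ≤ ‖p.leadingCoeff‖) (hy : 1 ≤ ‖y‖) :
    m * ‖y‖ ^ p.natDegree - p.natDegree * M * ‖y‖ ^ (p.natDegree - 1) ≤ ‖p.eval y‖ := by
  set n := p.natDegree
  have h_eval : p.eval y = p.coeff n * y ^ n + ∑ i ∈ Finset.range n, p.coeff i * y ^ i := by
    rw [eval_eq_sum_range, Finset.sum_range_succ, add_comm]
  have h_lead : m * ‖y‖ ^ n ≤ ‖p.coeff n * y ^ n‖ := by
    rw [norm_mul, norm_pow]
    exact mul_le_mul_of_nonneg_right hlc (by positivity)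
  have h_tail : ‖∑ i ∈ Finset.range n, p.coeff i * y ^ i‖ ≤ n * M * ‖y‖ ^ (n - 1) :=
    calc ‖∑ i ∈ Finset.range n, p.coeff i * y ^ i‖
        ≤ ∑ i ∈ Finset.range n, ‖p.coeff i * y ^ i‖ := norm_sum_le _ _
      _ ≤ ∑ _i ∈ Finset.range n, M * ‖y‖ ^ (n - 1) := by
          refine Finset.sum_le_sum fun i hi => ?_
          rw [norm_mul, norm_pow]
          exact mul_le_mul (hM i) (pow_le_pow_right₀ hy (by grind))
            (by positivity) ((norm_nonneg _).trans (hM 0))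
      _ = n * M * ‖y‖ ^ (n - 1) := by
          rw [Finset.sum_const, Finset.card_range, nsmul_eq_mul, mul_assoc]
  have h_tri := norm_add_le (p.coeff n * y ^ n + ∑ i ∈ Finset.range n, p.coeff i * y ^ i)
    (-∑ i ∈ Finset.range n, p.coeff i * y ^ i)
  rw [add_neg_cancel_right, norm_neg] at h_tri
  rw [h_eval]
  linarith

theorem mul_sub_le_norm_eval (hdeg : 2 ≤ p.natDegree) (hD : p.natDegree ≤ D)
    (hM : ∀ i, ‖p.coeff i‖ ≤ M) (hlc : m ≤ ‖p.leadingCoeff‖) (hy : 1 ≤ ‖y‖) :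
    ‖y‖ * (m * ‖y‖ - M * D) ≤ ‖p.eval y‖ := by
  set s := ‖y‖
  rcases lt_or_ge (m * s) (M * D) with h_small | h_large
  · nlinarith [norm_nonneg (p.eval y)]
  have h_poly := sub_le_norm_eval_of_norm_coeff_le hM hlc hy
  obtain ⟨k, hk⟩ : ∃ k, p.natDegree = k + 2 := ⟨p.natDegree - 2, by omega⟩
  rw [show p.natDegree - 1 = k + 1 by omega, hk] at h_poly
  have hM0 : 0 ≤ M := (norm_nonneg _).trans (hM 0)
  have hkD : ((k + 2 : ℕ) : ℝ) * M ≤ M * D := by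
    rw [mul_comm]; exact mul_le_mul_of_nonneg_left (by exact_mod_cast hk ▸ hD) hM0
  have hs_pow : s ≤ s ^ (k + 1) := by
    simpa using pow_le_pow_right₀ hy (Nat.le_add_left 1 k)
  calc s * (m * s - M * D) ≤ s ^ (k + 1) * (m * s - M * D) :=
        mul_le_mul_of_nonneg_right hs_pow (sub_nonneg.2 h_large)
    _ ≤ s ^ (k + 1) * (m * s - ((k + 2 : ℕ) : ℝ) * M) :=
        mul_le_mul_of_nonneg_left (by linarith) (by positivity)
    _ = m * s ^ (k + 2) - ((k + 2 : ℕ) : ℝ) * M * s ^ (k + 1) := by ring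
    _ ≤ ‖p.eval y‖ := h_poly

end Polynomial

theorem closure_VPlus_subset (R : ℝ) :
    closure (VPlus R) ⊆ {z | max R ‖z.1‖ ≤ ‖z.2‖} :=
  closure_lt_subset_le (continuous_const.max continuous_fst.norm) continuous_snd.norm

theorem closure_VMinus_subset (R : ℝ) :
    closure (VMinus R) ⊆ {z | max R ‖z.2‖ ≤ ‖z.1‖} :=
  closure_lt_subset_le (continuous_const.max continuous_snd.norm) continuous_fst.norm

namespace HenonMap

structure BoundedBy (f : HenonMap) (D : ℕ) (A Δ m M : ℝ) : Prop where
  natDegree_le : f.p.natDegree ≤ D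
  norm_a_le : ‖f.a‖ ≤ A
  norm_δ_le : ‖f.δ‖ ≤ Δ
  norm_coeff_le : ∀ i, ‖f.p.coeff i‖ ≤ M
  le_norm_leadingCoeff : m ≤ ‖f.p.leadingCoeff‖

/-- `2A ≤ R` gives `|x - a| ≥ |x|/2` on `V_R⁻`, and `mR ≥ 4(MD + 3Δ + 1)` pushes both escape
estimates past `3|·|`. -/
def escapeRadius (D : ℕ) (A Δ m M : ℝ) : ℝ :=
  max 2 (max (2 * A) (4 * (M * D + 3 * Δ + 1) / m))

variable {f : HenonMap} {D : ℕ} {A Δ m M R : ℝ}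

theorem BoundedBy.mul_sub_le_norm_eval (hf : f.BoundedBy D A Δ m M) {y : ℂ} (hy : 1 ≤ ‖y‖) :
    ‖y‖ * (m * ‖y‖ - M * D) ≤ ‖f.p.eval y‖ :=
  Polynomial.mul_sub_le_norm_eval f.hdeg hf.natDegree_le hf.norm_coeff_le
    hf.le_norm_leadingCoeff hy

theorem BoundedBy.mul_sub_le_norm_snd_toFun (hf : f.BoundedBy D A Δ m M) {z : ℂ × ℂ}
    (hx : ‖z.1‖ ≤ ‖z.2‖) (hy : 1 ≤ ‖z.2‖) :
    ‖z.2‖ * (m * ‖z.2‖ - M * D - Δ) ≤ ‖(f.toFun z).2‖ := by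
  have h_eval := hf.mul_sub_le_norm_eval hy
  have h_δx : ‖f.δ * z.1‖ ≤ Δ * ‖z.2‖ := by
    rw [norm_mul]
    exact mul_le_mul hf.norm_δ_le hx (norm_nonneg _) ((norm_nonneg _).trans hf.norm_δ_le)
  have h_tri := norm_sub_norm_le (f.p.eval z.2) (f.δ * z.1)
  change _ ≤ ‖f.p.eval z.2 - f.δ * z.1‖
  linarith

theorem BoundedBy.mul_sub_le_norm_δ_mul_norm_fst_invFun (hf : f.BoundedBy D A Δ m M)
    {z : ℂ × ℂ} (hw : 1 ≤ ‖z.1 - f.a‖) :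
    ‖z.1 - f.a‖ * (m * ‖z.1 - f.a‖ - M * D) - ‖z.2‖ ≤ ‖f.δ‖ * ‖(f.invFun z).1‖ := by
  have h_eval := hf.mul_sub_le_norm_eval hw
  have h_tri := norm_sub_norm_le (f.p.eval (z.1 - f.a)) z.2
  have h_cancel : ‖f.δ‖ * ‖(f.invFun z).1‖ = ‖f.p.eval (z.1 - f.a) - z.2‖ := by
    rw [invFun, norm_mul, norm_inv, mul_inv_cancel_left₀ (norm_ne_zero_iff.2 f.hδ)]
  linarith

theorem BoundedBy.toFun_mem_VPlus (hf : f.BoundedBy D A Δ m M) (hm : 0 < m)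
    (hR : escapeRadius D A Δ m M ≤ R) {z : ℂ × ℂ} (hz : z ∈ closure (VPlus R)) :
    f.toFun z ∈ VPlus R ∧ 2 * ‖z.2‖ < ‖(f.toFun z).2‖ := by
  obtain ⟨hR2, hRA, hRm⟩ : 2 ≤ R ∧ 2 * A ≤ R ∧ 4 * (M * D + 3 * Δ + 1) ≤ m * R := by
    simpa [escapeRadius, div_le_iff₀ hm, mul_comm R] using hR
  obtain ⟨htR, hxt⟩ : R ≤ ‖z.2‖ ∧ ‖z.1‖ ≤ ‖z.2‖ := max_le_iff.1 (closure_VPlus_subset R hz)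
  set t := ‖z.2‖
  have hMD : 0 ≤ M * D := mul_nonneg ((norm_nonneg _).trans (hf.norm_coeff_le 0)) D.cast_nonneg
  have hΔ : 0 ≤ Δ := (norm_nonneg _).trans hf.norm_δ_le
  have h_snd : 3 * t ≤ ‖(f.toFun z).2‖ := by
    have := hf.mul_sub_le_norm_snd_toFun hxt (by linarith)
    nlinarith [mul_le_mul_of_nonneg_left htR hm.le]
  have h_fst : ‖(f.toFun z).1‖ ≤ t + A :=
    (norm_add_le _ _).trans (add_le_add_right hf.norm_a_le t)
  have hVPlus : max R ‖(f.toFun z).1‖ < ‖(f.toFun z).2‖ := max_lt (by linarith) (by linarith)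
  exact ⟨hVPlus, by linarith⟩

theorem BoundedBy.invFun_mem_VMinus (hf : f.BoundedBy D A Δ m M) (hm : 0 < m)
    (hR : escapeRadius D A Δ m M ≤ R) {z : ℂ × ℂ} (hz : z ∈ closure (VMinus R)) :
    f.invFun z ∈ VMinus R ∧ 2 * ‖z.1‖ < ‖(f.invFun z).1‖ := by
  obtain ⟨hR2, hRA, hRm⟩ : 2 ≤ R ∧ 2 * A ≤ R ∧ 4 * (M * D + 3 * Δ + 1) ≤ m * R := by
    simpa [escapeRadius, div_le_iff₀ hm, mul_comm R] using hR
  obtain ⟨htR, hyt⟩ : R ≤ ‖z.1‖ ∧ ‖z.2‖ ≤ ‖z.1‖ := max_le_iff.1 (closure_VMinus_subset R hz)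
  set t := ‖z.1‖
  set s := ‖z.1 - f.a‖
  have hMD : 0 ≤ M * D := mul_nonneg ((norm_nonneg _).trans (hf.norm_coeff_le 0)) D.cast_nonneg
  have hΔ : 0 ≤ Δ := (norm_nonneg _).trans hf.norm_δ_le
  have hs : t / 2 ≤ s := by linarith [norm_sub_norm_le z.1 f.a, hf.norm_a_le]
  have h_mono : t / 2 * (m * (t / 2) - M * D) ≤ s * (m * s - M * D) := by
    have h_factor : 0 ≤ m * (s + t / 2) - M * D := by
      nlinarith [mul_le_mul_of_nonneg_left htR hm.le]
    nlinarith [mul_nonneg (sub_nonneg.2 hs) h_factor]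
  have h_fst : 3 * t ≤ ‖(f.invFun z).1‖ := by
    have h_est := hf.mul_sub_le_norm_δ_mul_norm_fst_invFun (z := z) (by linarith)
    have hδ : 0 < ‖f.δ‖ := norm_pos_iff.2 f.hδ
    have : ‖f.δ‖ * (3 * t) ≤ ‖f.δ‖ * ‖(f.invFun z).1‖ := by
      nlinarith [mul_le_mul_of_nonneg_left htR hm.le, hf.norm_δ_le]
    exact le_of_mul_le_mul_left this hδ
  have h_snd : ‖(f.invFun z).2‖ ≤ t + A :=
    (norm_sub_le _ _).trans (add_le_add_right hf.norm_a_le t)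
  have hVMinus : max R ‖(f.invFun z).2‖ < ‖(f.invFun z).1‖ := max_lt (by linarith) (by linarith)
  exact ⟨hVMinus, by linarith⟩

theorem BoundedBy.condA (hf : f.BoundedBy D A Δ m M) (hm : 0 < m)
    (hR : escapeRadius D A Δ m M ≤ R) : CondA f R 2 :=
  ⟨fun _ hz => hf.toFun_mem_VPlus hm hR hz, fun _ hz => hf.invFun_mem_VMinus hm hR hz⟩

end HenonMap

theorem ParamBounded.exists_boundedBy {Γ : Set HenonMap} (hΓ : ParamBounded Γ) :
    ∃ (D : ℕ) (A Δ m M : ℝ), 0 < m ∧ ∀ f ∈ Γ, f.BoundedBy D A Δ m M := by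
  obtain ⟨D, A, _, Δ, m, M, -, -, -, -, hm, -, hbound⟩ := hΓ
  refine ⟨D, A, Δ, m, M, hm, fun f hf => ?_⟩
  obtain ⟨hD, hA, -, hΔ, hM, hlc⟩ := hbound f hf
  exact ⟨hD, hA, hΔ, hM, hlc⟩

theorem stmt_2_general (Γ : Set HenonMap) (hΓ : ParamBounded Γ) :
    ∃ R₀ : ℝ, 1 < R₀ ∧ ∀ R : ℝ, R₀ ≤ R → ∃ ρ : ℝ, 1 < ρ ∧ ∀ g ∈ Γ, CondA g R ρ := by
  obtain ⟨D, A, Δ, m, M, hm, hbound⟩ := hΓ.exists_boundedBy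
  refine ⟨HenonMap.escapeRadius D A Δ m M, one_lt_two.trans_le (le_max_left _ _), ?_⟩
  exact fun R hR => ⟨2, one_lt_two, fun g hg => (hbound g hg).condA hm hR⟩

/-- uniform condition (A) for a nonempty parameter-bounded family. -/
theorem stmt_2 (Γ : Set HenonMap) (hne : Γ.Nonempty) (hΓ : ParamBounded Γ) :
    ∃ R₀ : ℝ, 1 < R₀ ∧ ∀ R : ℝ, R₀ ≤ R → ∃ ρ : ℝ, 1 < ρ ∧ ∀ g ∈ Γ, CondA g R ρ :=
  stmt_2_general Γ hΓ
end
end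

section
/- Let γ = (γ_j)_{j∈ℤ} be a sequence of Hénon-form maps, and suppose there exists R₀ > 0 such that for every R > R₀ there exists ρ > 1 such that every γ_j (j ∈ ℤ) satisfies condition (A) for (R, ρ). Then for every R > R₀, setting E_{γ,R} := D_R ∩ K_γ⁺: (i) for every n ≥ 1, E_{γ,R} ⊆ γ₀⁻¹(E_{σ(γ),R}) ⊆ (γ₁∘γ₀)⁻¹(E_{σ²(γ),R}) ⊆ ⋯ ⊆ (γ_{n−1}∘⋯∘γ₀)⁻¹(E_{σⁿ(γ),R}); and (ii) K_γ⁺ = ⋃_{n≥1} (γ_{n−1}∘⋯∘γ₀)⁻¹(E_{σⁿ(γ),R}). -/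
open Complex Filter Set Topology MeasureTheory Bornology

noncomputable section

/-! A point of `K_γ⁺` can never sit in `closure V_R⁺`, since there the second coordinate of the
orbit grows like `ρⁿ`. Outside `D_R` it therefore lies in `closure V_R⁻`, where each `γ_j⁻¹`
expands the first coordinate by `ρ`. Hence a point of `D_R ∩ K_γ⁺` cannot be mapped out of `D_R`
(its preimage would lie in `V_R⁻`), and an orbit in `K_γ⁺` cannot avoid `D_R` forever (its first
coordinates would shrink like `ρ⁻ⁿ` while staying above `R`). -/

lemma HenonMap.invFun_toFun (f : HenonMap) (z : ℂ × ℂ) : f.invFun (f.toFun z) = z := by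
  ext
  · simp only [HenonMap.invFun, HenonMap.toFun, add_sub_cancel_right, sub_sub_cancel,
      inv_mul_cancel_left₀ f.hδ]
  · simp [HenonMap.invFun, HenonMap.toFun]

lemma closure_VPlus {R : ℝ} (hR : 0 < R) :
    closure (VPlus R) = {z | max R ‖z.1‖ ≤ ‖z.2‖} := by
  refine subset_antisymm (closure_minimal (fun z hz => show max R ‖z.1‖ ≤ ‖z.2‖ from le_of_lt hz)
    (isClosed_le (by fun_prop) (by fun_prop))) ?_
  intro z (hz : max R ‖z.1‖ ≤ ‖z.2‖)
  have hz₂ : 0 < ‖z.2‖ := hR.trans_le ((le_max_left _ _).trans hz)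
  have hlim : Tendsto (fun t : ℝ => (z.1, (t : ℂ) * z.2)) (𝓝[>] 1) (𝓝 z) := by
    have hcont : Continuous fun t : ℝ => (z.1, (t : ℂ) * z.2) := by fun_prop
    simpa using (hcont.tendsto 1).mono_left nhdsWithin_le_nhds
  refine mem_closure_of_tendsto hlim (eventually_nhdsWithin_of_forall fun t (ht : 1 < t) => ?_)
  show max R ‖z.1‖ < ‖(t : ℂ) * z.2‖
  rw [norm_mul, Complex.norm_real, Real.norm_of_nonneg (by linarith)]
  nlinarith

lemma closure_VMinus {R : ℝ} (hR : 0 < R) :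
    closure (VMinus R) = {z | max R ‖z.2‖ ≤ ‖z.1‖} := by
  have hswap : VMinus R = Homeomorph.prodComm ℂ ℂ ⁻¹' VPlus R := rfl
  rw [hswap, ← Homeomorph.preimage_closure, closure_VPlus hR]
  rfl

lemma mem_closure_VPlus_or_VMinus_of_notMem_DDisk {R : ℝ} (hR : 0 < R) {z : ℂ × ℂ}
    (hz : z ∉ DDisk R) : z ∈ closure (VPlus R) ∨ z ∈ closure (VMinus R) := by
  simp only [DDisk, mem_ofPred_eq, not_lt] at hz
  rw [closure_VPlus hR, closure_VMinus hR]
  rcases le_total ‖z.1‖ ‖z.2‖ with h | h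
  · exact Or.inl (max_le (hz.trans_eq (max_eq_right h)) h)
  · exact Or.inr (max_le (hz.trans_eq (max_eq_left h)) h)

lemma CondA.lt_norm_fst_of_toFun_mem_closure_VMinus {f : HenonMap} {R ρ : ℝ}
    (hf : CondA f R ρ) {w : ℂ × ℂ} (hw : f.toFun w ∈ closure (VMinus R)) :
    R < ‖w.1‖ ∧ ρ * ‖(f.toFun w).1‖ < ‖w.1‖ := by
  obtain ⟨hmem, hexp⟩ := hf.2 _ hw
  rw [HenonMap.invFun_toFun] at hmem hexp
  exact ⟨(le_max_left _ _).trans_lt hmem, hexp⟩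

lemma not_forall_pow_mul_le {ρ a b : ℝ} (hρ : 1 < ρ) (ha : 0 < a) :
    ¬ ∀ k : ℕ, ρ ^ k * a ≤ b := by
  intro h
  obtain ⟨k, hk⟩ := pow_unbounded_of_one_lt (b / a) hρ
  exact (h k).not_gt ((div_lt_iff₀ ha).mp hk)

lemma shiftIter_shiftIter (γ : ℤ → HenonMap) (n m : ℕ) :
    shiftIter (shiftIter γ n) m = shiftIter γ (n + m) := by
  funext j
  simp only [shiftIter, Nat.cast_add, add_assoc, add_comm (m : ℤ)]

lemma fwd_add (γ : ℤ → HenonMap) (n k : ℕ) (z : ℂ × ℂ) :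
    fwd γ (n + k) z = fwd (shiftIter γ n) k (fwd γ n z) := by
  induction k with
  | zero => rfl
  | succ k ih =>
    show (γ ((n + k : ℕ) : ℤ)).toFun (fwd γ (n + k) z) = (γ (k + n)).toFun _
    rw [ih, Nat.cast_add, add_comm]

lemma fwd_mem_KPlus_shiftIter_iff {γ : ℤ → HenonMap} {z : ℂ × ℂ} {n : ℕ} :
    fwd γ n z ∈ KPlus (shiftIter γ n) ↔ z ∈ KPlus γ := by
  simp only [KPlus, mem_ofPred_eq, ← fwd_add]
  constructor
  · intro htail
    refine ((((finite_Iio n).image fun m => fwd γ m z).isBounded).union htail).subset ?_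
    rintro _ ⟨m, rfl⟩
    rcases lt_or_ge m n with hm | hm
    · exact Or.inl ⟨m, hm, rfl⟩
    · exact Or.inr ⟨m - n, by simp only [Nat.add_sub_cancel' hm]⟩
  · exact fun h => h.subset (range_subset_iff.2 fun k => mem_range_self _)

section ConditionA

variable {γ : ℤ → HenonMap} {R ρ : ℝ}

lemma fwd_mem_closure_VPlus_and_pow_mul_le (hρ : 0 ≤ ρ) (hγ : ∀ j, CondA (γ j) R ρ)
    {z : ℂ × ℂ} (hz : z ∈ closure (VPlus R)) (k : ℕ) :
    fwd γ k z ∈ closure (VPlus R) ∧ ρ ^ k * ‖z.2‖ ≤ ‖(fwd γ k z).2‖ := by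
  induction k with
  | zero => simpa [fwd] using hz
  | succ k ih =>
    obtain ⟨hmem, hgrow⟩ := (hγ k).1 _ ih.1
    refine ⟨subset_closure hmem, ?_⟩
    calc ρ ^ (k + 1) * ‖z.2‖ = ρ * (ρ ^ k * ‖z.2‖) := by ring
      _ ≤ ρ * ‖(fwd γ k z).2‖ := mul_le_mul_of_nonneg_left ih.2 hρ
      _ ≤ ‖(fwd γ (k + 1) z).2‖ := hgrow.le

lemma notMem_KPlus_of_mem_closure_VPlus (hR : 0 < R) (hρ : 1 < ρ)
    (hγ : ∀ j, CondA (γ j) R ρ) {z : ℂ × ℂ} (hz : z ∈ closure (VPlus R)) :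
    z ∉ KPlus γ := by
  intro (hK : IsBounded (range fun k => fwd γ k z))
  obtain ⟨C, hC⟩ := isBounded_iff_forall_norm_le.1 hK
  have hz₂ : R ≤ ‖z.2‖ := (le_max_left _ _).trans (by rwa [closure_VPlus hR] at hz)
  refine not_forall_pow_mul_le (b := C) hρ (hR.trans_le hz₂) fun k => ?_
  exact (fwd_mem_closure_VPlus_and_pow_mul_le (by linarith) hγ hz k).2.trans
    ((norm_snd_le _).trans (hC _ (mem_range_self k)))

lemma mem_closure_VMinus_of_mem_KPlus (hR : 0 < R) (hρ : 1 < ρ)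
    (hγ : ∀ j, CondA (γ j) R ρ) {z : ℂ × ℂ} (hK : z ∈ KPlus γ) (hD : z ∉ DDisk R) :
    z ∈ closure (VMinus R) :=
  (mem_closure_VPlus_or_VMinus_of_notMem_DDisk hR hD).resolve_left
    fun h => notMem_KPlus_of_mem_closure_VPlus hR hρ hγ h hK

lemma DDisk_inter_KPlus_subset_preimage_fwd_one (hR : 0 < R) (hρ : 1 < ρ)
    (hγ : ∀ j, CondA (γ j) R ρ) :
    DDisk R ∩ KPlus γ ⊆ fwd γ 1 ⁻¹' (DDisk R ∩ KPlus (shiftIter γ 1)) := by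
  rintro w ⟨hD, hK⟩
  have hK' : fwd γ 1 w ∈ KPlus (shiftIter γ 1) := fwd_mem_KPlus_shiftIter_iff.2 hK
  refine ⟨by_contra fun hD' => ?_, hK'⟩
  have hV := mem_closure_VMinus_of_mem_KPlus hR hρ (fun j => hγ _) hK' hD'
  have hR_lt := ((hγ 0).lt_norm_fst_of_toFun_mem_closure_VMinus hV).1
  exact (lt_of_le_of_lt (le_max_left _ _) hD).not_gt hR_lt

lemma preimage_fwd_DDisk_inter_KPlus_subset_succ (hR : 0 < R) (hρ : 1 < ρ)
    (hγ : ∀ j, CondA (γ j) R ρ) (n : ℕ) :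
    fwd γ n ⁻¹' (DDisk R ∩ KPlus (shiftIter γ n)) ⊆
      fwd γ (n + 1) ⁻¹' (DDisk R ∩ KPlus (shiftIter γ (n + 1))) := by
  intro z hz
  have :=
    DDisk_inter_KPlus_subset_preimage_fwd_one (γ := shiftIter γ n) hR hρ (fun j => hγ _) hz
  rwa [mem_preimage, ← fwd_add, shiftIter_shiftIter] at this

lemma exists_fwd_succ_mem_DDisk (hR : 0 < R) (hρ : 1 < ρ)
    (hγ : ∀ j, CondA (γ j) R ρ) {z : ℂ × ℂ} (hz : z ∈ KPlus γ) :
    ∃ n : ℕ, fwd γ (n + 1) z ∈ DDisk R := by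
  by_contra! hout
  set w : ℕ → ℂ × ℂ := fun n => fwd γ (n + 1) z
  have hV (n : ℕ) : w n ∈ closure (VMinus R) :=
    mem_closure_VMinus_of_mem_KPlus hR hρ (fun j => hγ _)
      (fwd_mem_KPlus_shiftIter_iff.2 hz) (hout n)
  have hstep (n : ℕ) : R < ‖(w n).1‖ ∧ ρ * ‖(w (n + 1)).1‖ < ‖(w n).1‖ :=
    (hγ ((n + 1 : ℕ) : ℤ)).lt_norm_fst_of_toFun_mem_closure_VMinus (hV (n + 1))
  have hshrink (k : ℕ) : ρ ^ k * ‖(w k).1‖ ≤ ‖(w 0).1‖ := by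
    induction k with
    | zero => simp
    | succ k ih =>
      calc ρ ^ (k + 1) * ‖(w (k + 1)).1‖ = ρ ^ k * (ρ * ‖(w (k + 1)).1‖) := by ring
        _ ≤ ρ ^ k * ‖(w k).1‖ := by gcongr; exact (hstep k).2.le
        _ ≤ ‖(w 0).1‖ := ih
  exact not_forall_pow_mul_le hρ hR fun k => calc
    ρ ^ k * R ≤ ρ ^ k * ‖(w k).1‖ := by gcongr; exact (hstep k).1.le
    _ ≤ ‖(w 0).1‖ := hshrink k

end ConditionA

/-- the increasing chain of preimages of `E_{σⁿ(γ),R}` and the description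
of `K_γ⁺` as their union. -/
theorem stmt_7 (γ : ℤ → HenonMap) (R₀ : ℝ) (hR₀ : 0 < R₀)
    (hA : ∀ R : ℝ, R₀ < R → ∃ ρ : ℝ, 1 < ρ ∧ ∀ j : ℤ, CondA (γ j) R ρ) :
    ∀ R : ℝ, R₀ < R →
      (∀ n : ℕ,
        fwd γ n ⁻¹' (DDisk R ∩ KPlus (shiftIter γ n)) ⊆
          fwd γ (n + 1) ⁻¹' (DDisk R ∩ KPlus (shiftIter γ (n + 1)))) ∧
      KPlus γ = ⋃ n : ℕ, fwd γ (n + 1) ⁻¹' (DDisk R ∩ KPlus (shiftIter γ (n + 1))) := by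
  intro R hR
  obtain ⟨ρ, hρ, hγ⟩ := hA R hR
  have hR_pos : 0 < R := hR₀.trans hR
  refine ⟨preimage_fwd_DDisk_inter_KPlus_subset_succ hR_pos hρ hγ, ?_⟩
  ext z
  simp only [mem_iUnion, mem_preimage, mem_inter_iff, fwd_mem_KPlus_shiftIter_iff]
  refine ⟨fun hz => ?_, fun ⟨_, _, hz⟩ => hz⟩
  obtain ⟨n, hn⟩ := exists_fwd_succ_mem_DDisk hR_pos hρ hγ hz
  exact ⟨n, hn, hz⟩
end
end

section
/- Let γ = (γ_j)_{j∈ℤ} be a sequence of Hénon-form maps, and suppose there exists R₀ > 0 such that for every R > R₀ there exists ρ > 1 such that every γ_j (j ∈ ℤ) satisfies condition (A) for (R, ρ). If limsup_{n→∞} (1/n) Σ_{j=0}^{n−1} log|δ(γ_j)| > 0, then Leb₄(K_γ⁺) = 0. -/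
open Complex Filter Set Topology MeasureTheory Bornology

noncomputable section

/-!
A Hénon map multiplies Lebesgue measure on `ℂ²` by `|δ|²`: up to swapping the coordinates it is
a skew product over a translation whose fibre maps `v ↦ p(u) - δ v` are complex affine. So if all
forward iterates of a set `S` stay in a fixed ball, the images `γ_{n-1,0}(S)` lie in that ball and
have measure `|δ(γ₀) ⋯ δ(γ_{n-1})|² · Leb₄(S)`. A positive limsup of the averaged `log |δ(γ_j)|`
makes these Jacobians unbounded, forcing `Leb₄(S) = 0`; and `K_γ⁺` is a countable union of such
sets `S`.
-/

open scoped ENNReal NNReal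

lemma Complex.map_mul_left_volume {c : ℂ} (hc : c ≠ 0) :
    Measure.map (c * ·) volume = ((‖c‖₊ ^ 2)⁻¹ : ℝ≥0) • (volume : Measure ℂ) := by
  have hdet : LinearMap.det (Algebra.lmul ℝ ℂ c) = ‖c‖ ^ 2 := by
    rw [← Algebra.norm_apply, Algebra.norm_complex_apply, Complex.normSq_eq_norm_sq]
  have h := Measure.map_linearMap_addHaar_eq_smul_addHaar volume
    (f := Algebra.lmul ℝ ℂ c) (by rw [hdet]; positivity)
  rw [hdet, abs_of_nonneg (by positivity), ← coe_nnnorm, ← NNReal.coe_pow, ← NNReal.coe_inv,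
    ENNReal.ofReal_coe_nnreal] at h
  exact h

namespace HenonMap

variable (f : HenonMap)

lemma invFun_toFun_s8 (z : ℂ × ℂ) : f.invFun (f.toFun z) = z := by
  simp only [toFun, invFun, add_sub_cancel_right, sub_sub_cancel, inv_mul_cancel_left₀ f.hδ]

lemma injective_toFun : Function.Injective f.toFun :=
  Function.LeftInverse.injective f.invFun_toFun_s8

lemma continuous_toFun : Continuous f.toFun := by
  unfold toFun; fun_prop

lemma map_toFun_volume :
    Measure.map f.toFun volume = ((‖f.δ‖₊ ^ 2)⁻¹ : ℝ≥0) • (volume : Measure (ℂ × ℂ)) := by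
  set c : ℝ≥0 := (‖f.δ‖₊ ^ 2)⁻¹
  have hfiber : ∀ u : ℂ, Measure.map (fun v => f.p.eval u - f.δ * v) volume = c • volume := by
    intro u
    have h : (fun v : ℂ => f.p.eval u - f.δ * v) = (f.p.eval u + ·) ∘ (-f.δ * ·) := by
      funext v; simp only [Function.comp_apply]; ring
    rw [h, ← Measure.map_map (measurable_const_add _) (measurable_const_mul _),
      Complex.map_mul_left_volume (neg_ne_zero.2 f.hδ), nnnorm_neg, Measure.map_smul,
      (measurePreserving_add_left volume _).map_eq]
  have hskew : MeasurePreserving (fun q : ℂ × ℂ => (q.1 + f.a, f.p.eval q.1 - f.δ * q.2))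
      (volume.prod volume) (volume.prod (c • volume)) :=
    (measurePreserving_add_right volume f.a).skew_product (by fun_prop) (ae_of_all _ hfiber)
  rw [Measure.volume_eq_prod, ← Measure.prod_smul_right]
  exact (hskew.comp Measure.measurePreserving_swap).map_eq

lemma volume_image_toFun (s : Set (ℂ × ℂ)) :
    volume (f.toFun '' s) = (‖f.δ‖₊ ^ 2 : ℝ≥0) * volume s := by
  have hc : ‖f.δ‖₊ ^ 2 ≠ 0 := pow_ne_zero _ (nnnorm_ne_zero_iff.2 f.hδ)
  have h := (f.continuous_toFun.measurableEmbedding f.injective_toFun).map_apply volume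
    (f.toFun '' s)
  rw [f.map_toFun_volume, Measure.smul_apply, ENNReal.smul_def, smul_eq_mul,
    preimage_image_eq _ f.injective_toFun, ENNReal.coe_inv hc] at h
  rw [← h, ← mul_assoc, ENNReal.mul_inv_cancel (by exact_mod_cast hc) ENNReal.coe_ne_top, one_mul]

end HenonMap

lemma volume_image_fwd (γ : ℤ → HenonMap) (n : ℕ) (s : Set (ℂ × ℂ)) :
    volume (fwd γ n '' s) = (∏ j ∈ Finset.range n, ‖(γ j).δ‖₊ ^ 2 : ℝ≥0) * volume s := by
  induction n with
  | zero => simp [fwd]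
  | succ n ih =>
    rw [show fwd γ (n + 1) = (γ n).toFun ∘ fwd γ n from rfl, image_comp,
      HenonMap.volume_image_toFun, ih, Finset.prod_range_succ, ENNReal.coe_mul]
    ring

lemma not_bddAbove_range_of_limsup_avg_pos {u : ℕ → ℝ}
    (h : 0 < limsup (fun n : ℕ => ((1 / n * u n : ℝ) : EReal)) atTop) :
    ¬BddAbove (range u) := by
  rintro ⟨C, hC⟩
  obtain ⟨ε, hε, hεlt⟩ := EReal.lt_iff_exists_real_btwn.1 h
  obtain ⟨n, hn, hεn⟩ := frequently_atTop.1 (frequently_lt_of_lt_limsup (by isBoundedDefault) hεlt)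
    (max 1 ⌈C / ε⌉₊)
  have hε : 0 < ε := by exact_mod_cast hε
  have hn0 : (0 : ℝ) < n := by exact_mod_cast (le_max_left _ _).trans hn
  have hCn : C / ε ≤ n := (Nat.le_ceil _).trans (by exact_mod_cast (le_max_right _ _).trans hn)
  have hεn : n * ε < u n := by
    have : ε < 1 / n * u n := by exact_mod_cast hεn
    rwa [one_div, inv_mul_eq_div, lt_div_iff₀ hn0, mul_comm] at this
  have hun : u n ≤ C := hC ⟨n, rfl⟩
  rw [div_le_iff₀ hε] at hCn
  linarith

lemma iSup_prod_nnnorm_sq_eq_top {E : Type*} [NormedAddCommGroup E] {x : ℕ → E}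
    (hx : ∀ j, x j ≠ 0) (h : ¬BddAbove (range fun n => ∑ j ∈ Finset.range n, Real.log ‖x j‖)) :
    ⨆ n, ((∏ j ∈ Finset.range n, ‖x j‖₊ ^ 2 : ℝ≥0) : ℝ≥0∞) = ⊤ := by
  rw [ENNReal.iSup_coe_eq_top]
  rintro ⟨C, hC⟩
  refine h ⟨(C - 1) / 2, ?_⟩
  rintro _ ⟨n, rfl⟩
  have hprod : ((∏ j ∈ Finset.range n, ‖x j‖₊ ^ 2 : ℝ≥0) : ℝ)
      = Real.exp (2 * ∑ j ∈ Finset.range n, Real.log ‖x j‖) := by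
    push_cast
    rw [Finset.mul_sum, Real.exp_sum]
    refine Finset.prod_congr rfl fun j _ => ?_
    have hxj : 0 < ‖x j‖ := norm_pos_iff.2 (hx j)
    rw [← Real.exp_log (pow_pos hxj 2), Real.log_pow]
    norm_num
  have hle : ((∏ j ∈ Finset.range n, ‖x j‖₊ ^ 2 : ℝ≥0) : ℝ) ≤ C := NNReal.coe_le_coe.2 (hC ⟨n, rfl⟩)
  linarith [Real.add_one_le_exp (2 * ∑ j ∈ Finset.range n, Real.log ‖x j‖)]

theorem measure_setOf_isBounded_range_eq_zero {E : Type*} [NormedAddCommGroup E] [ProperSpace E]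
    [MeasurableSpace E] {μ : Measure E} [IsFiniteMeasureOnCompacts μ] {f : ℕ → E → E}
    {J : ℕ → ℝ≥0∞} (hJ : ⨆ n, J n = ⊤) (himage : ∀ n s, J n * μ s ≤ μ (f n '' s)) :
    μ {x | IsBounded (range fun n => f n x)} = 0 := by
  have hcover : {x | IsBounded (range fun n => f n x)} ⊆ ⋃ r : ℕ, {x | ∀ n, ‖f n x‖ ≤ r} := by
    intro x hx
    obtain ⟨C, hC⟩ := isBounded_iff_forall_norm_le.1 hx
    exact mem_iUnion.2 ⟨⌈C⌉₊, fun n => (hC _ ⟨n, rfl⟩).trans (Nat.le_ceil C)⟩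
  refine measure_mono_null hcover (measure_iUnion_null fun r => ?_)
  set s := {x | ∀ n, ‖f n x‖ ≤ r}
  have hbound : ∀ n, J n * μ s ≤ μ (Metric.closedBall 0 r) := fun n =>
    (himage n s).trans <| measure_mono <| by
      rintro _ ⟨x, hx, rfl⟩
      simpa using hx n
  by_contra hs
  have htop : ⨆ n, J n * μ s ≤ μ (Metric.closedBall 0 r) := iSup_le hbound
  rw [← ENNReal.iSup_mul, hJ, ENNReal.top_mul hs, top_le_iff] at htop
  exact measure_closedBall_lt_top.ne htop

theorem stmt_8_general (γ : ℤ → HenonMap)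
    (hlim : 0 < Filter.limsup
      (fun n : ℕ => ((((1 : ℝ) / n) * ∑ j ∈ Finset.range n,
        Real.log (‖(γ (j : ℤ)).δ‖) : ℝ) : EReal)) Filter.atTop) :
    volume (KPlus γ) = 0 :=
  measure_setOf_isBounded_range_eq_zero
    (iSup_prod_nnnorm_sq_eq_top (fun j => (γ j).hδ) (not_bddAbove_range_of_limsup_avg_pos hlim))
    fun n s => (volume_image_fwd γ n s).ge

/-- if the average logarithm of the Jacobians has positive limsup, then
`K_γ⁺` has Lebesgue measure zero. -/
theorem stmt_8 (γ : ℤ → HenonMap) (R₀ : ℝ) (hR₀ : 0 < R₀)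
    (hA : ∀ R : ℝ, R₀ < R → ∃ ρ : ℝ, 1 < ρ ∧ ∀ j : ℤ, CondA (γ j) R ρ)
    (hlim : 0 < Filter.limsup
      (fun n : ℕ => ((((1 : ℝ) / n) * ∑ j ∈ Finset.range n,
        Real.log (‖(γ (j : ℤ)).δ‖) : ℝ) : EReal)) Filter.atTop) :
    volume (KPlus γ) = 0 :=
  stmt_8_general γ hlim
end
end

section
/- Let γ = (γ_j)_{j∈ℤ} be a sequence of Hénon-form maps, and suppose there exists R₀ > 0 such that for every R > R₀ there exists ρ > 1 such that every γ_j (j ∈ ℤ) satisfies condition (A) for (R, ρ). Suppose limsup_{n→∞} (1/n) Σ_{j=0}^{n−1} log|δ(γ_j)| < 0, and suppose there exists a nonempty bounded open set U ⊆ ℂ² such that γ_j(U) ⊆ U for every j ≥ 0. Then Leb₄(K_γ⁺) = ∞. -/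
open Complex Filter Set Topology MeasureTheory Bornology

noncomputable section

/-! Each `γ_j` multiplies Lebesgue measure by `|δ_j|²` (it is a skew product over a translation
whose fibre maps are affine with linear part `-δ_j`), so the preimage of `U` under
`γ_{n-1} ∘ ⋯ ∘ γ₀` has volume `vol U · ∏_{j<n} |δ_j|⁻²`. The limsup hypothesis makes
`∑_{j<n} log |δ_j|` tend to `-∞`, so these volumes blow up, while forward invariance and
boundedness of `U` put every such preimage inside `K_γ⁺`. -/

theorem Complex.det_mulLeft (c : ℂ) : LinearMap.det (LinearMap.mulLeft ℝ c) = normSq c :=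
  Algebra.norm_complex_apply c

theorem Complex.map_volume_sub_mul {c : ℂ} (hc : c ≠ 0) (b : ℂ) :
    Measure.map (fun z : ℂ => b - c * z) volume = ENNReal.ofReal (normSq c)⁻¹ • volume := by
  have hdet : LinearMap.det (LinearMap.mulLeft ℝ (-c)) ≠ 0 := by
    simpa [Complex.det_mulLeft] using hc
  have hmul := Measure.map_linearMap_addHaar_eq_smul_addHaar volume hdet
  rw [Complex.det_mulLeft, normSq_neg,
    abs_of_nonneg (inv_nonneg.2 (normSq_nonneg c))] at hmul
  have hsplit : (fun z : ℂ => b - c * z) = (b + ·) ∘ LinearMap.mulLeft ℝ (-c) := by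
    funext z; simp [sub_eq_add_neg]
  rw [hsplit, ← Measure.map_map (by fun_prop)
    (LinearMap.mulLeft ℝ (-c)).continuous_of_finiteDimensional.measurable, hmul,
    Measure.map_smul, map_add_left_eq_self]

namespace HenonMap

theorem measurable_toFun (f : HenonMap) : Measurable f.toFun := by
  unfold toFun
  exact (measurable_snd.add_const _).prodMk
    ((f.p.continuous.measurable.comp measurable_snd).sub (measurable_fst.const_mul _))

theorem map_volume (f : HenonMap) :
    Measure.map f.toFun volume = ENNReal.ofReal (normSq f.δ)⁻¹ • volume := by
  have hskew : MeasurePreserving (fun q : ℂ × ℂ => (q.1 + f.a, f.p.eval q.1 - f.δ * q.2))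
      (volume.prod volume) (volume.prod (ENNReal.ofReal (normSq f.δ)⁻¹ • volume)) :=
    (measurePreserving_add_right volume f.a).skew_product
      ((f.p.continuous.measurable.comp measurable_fst).sub (measurable_snd.const_mul _))
      (ae_of_all _ fun y => Complex.map_volume_sub_mul f.hδ (f.p.eval y))
  have hsplit : f.toFun = (fun q : ℂ × ℂ => (q.1 + f.a, f.p.eval q.1 - f.δ * q.2)) ∘ Prod.swap :=
    rfl
  rw [Measure.volume_eq_prod, hsplit, ← Measure.map_map hskew.measurable measurable_swap,
    Measure.measurePreserving_swap.map_eq, hskew.map_eq, Measure.prod_smul_right]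

theorem volume_preimage (f : HenonMap) {S : Set (ℂ × ℂ)} (hS : MeasurableSet S) :
    volume (f.toFun ⁻¹' S) = ENNReal.ofReal (normSq f.δ)⁻¹ * volume S := by
  rw [← Measure.map_apply f.measurable_toFun hS, map_volume, Measure.smul_apply, smul_eq_mul]

end HenonMap

theorem volume_preimage_fwd (γ : ℤ → HenonMap) (n : ℕ) {S : Set (ℂ × ℂ)} (hS : MeasurableSet S) :
    volume (fwd γ n ⁻¹' S)
      = (∏ j ∈ Finset.range n, ENNReal.ofReal (normSq (γ j).δ)⁻¹) * volume S := by
  induction n generalizing S with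
  | zero => simp [fwd]
  | succ n ih =>
    rw [Finset.prod_range_succ, mul_assoc, ← (γ n).volume_preimage hS,
      ← ih ((γ n).measurable_toFun hS)]
    rfl

theorem fwd_mem_of_mapsTo {γ : ℤ → HenonMap} {U : Set (ℂ × ℂ)}
    (hU : ∀ j : ℕ, MapsTo (γ j).toFun U U) {z : ℂ × ℂ} {n m : ℕ} (hz : fwd γ n z ∈ U)
    (hnm : n ≤ m) : fwd γ m z ∈ U := by
  induction m, hnm using Nat.le_induction with
  | base => exact hz
  | succ m _ ih => exact hU m ih

theorem preimage_fwd_subset_KPlus {γ : ℤ → HenonMap} {U : Set (ℂ × ℂ)} (hUb : IsBounded U)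
    (hU : ∀ j : ℕ, MapsTo (γ j).toFun U U) (n : ℕ) : fwd γ n ⁻¹' U ⊆ KPlus γ := by
  intro z hz
  refine (((finite_Iic n).image fun m => fwd γ m z).isBounded.union hUb).subset ?_
  rintro _ ⟨m, rfl⟩
  rcases le_or_gt m n with hm | hm
  · exact Or.inl ⟨m, hm, rfl⟩
  · exact Or.inr (fwd_mem_of_mapsTo hU hz hm.le)

theorem tendsto_sum_atBot_of_limsup_avg_neg {u : ℕ → ℝ}
    (h : limsup (fun n : ℕ => (((1 : ℝ) / n * ∑ j ∈ Finset.range n, u j : ℝ) : EReal)) atTop < 0) :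
    Tendsto (fun n => ∑ j ∈ Finset.range n, u j) atTop atBot := by
  obtain ⟨c, hc, hc0⟩ : ∃ c : ℝ, limsup (fun n : ℕ =>
      (((1 : ℝ) / n * ∑ j ∈ Finset.range n, u j : ℝ) : EReal)) atTop < c ∧ c < 0 := by
    obtain ⟨x, hx, hx0⟩ := exists_between h
    lift x to ℝ using ⟨hx0.ne_top, (bot_le.trans_lt hx).ne'⟩
    exact ⟨x, hx, by exact_mod_cast hx0⟩
  have hlin : Tendsto (fun n : ℕ => c * n) atTop atBot :=
    tendsto_natCast_atTop_atTop.const_mul_atTop_of_neg hc0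
  refine tendsto_atBot_mono' atTop ?_ hlin
  filter_upwards [eventually_lt_of_limsup_lt hc, eventually_gt_atTop 0] with n hn hn0
  have hn0' : (0 : ℝ) < n := by exact_mod_cast hn0
  have : 1 / n * ∑ j ∈ Finset.range n, u j < c := by exact_mod_cast hn
  rw [one_div, inv_mul_lt_iff₀ hn0'] at this
  linarith

theorem tendsto_prod_ofReal_inv_normSq_atTop {δ : ℕ → ℂ} (hδ : ∀ j, δ j ≠ 0)
    (h : Tendsto (fun n => ∑ j ∈ Finset.range n, Real.log ‖δ j‖) atTop atBot) :
    Tendsto (fun n => ∏ j ∈ Finset.range n, ENNReal.ofReal (normSq (δ j))⁻¹) atTop (𝓝 ⊤) := by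
  have hexp : ∀ j, (normSq (δ j))⁻¹ = Real.exp (-2 * Real.log ‖δ j‖) := fun j => by
    rw [neg_mul, Real.exp_neg, two_mul, Real.exp_add, Real.exp_log (norm_pos_iff.2 (hδ j)),
      norm_mul_self_eq_normSq]
  have hprod : ∀ n, ∏ j ∈ Finset.range n, ENNReal.ofReal (normSq (δ j))⁻¹
      = ENNReal.ofReal (Real.exp (-2 * ∑ j ∈ Finset.range n, Real.log ‖δ j‖)) := fun n => by
    rw [← ENNReal.ofReal_prod_of_nonneg fun j _ => inv_nonneg.2 (normSq_nonneg _),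
      Finset.mul_sum, Real.exp_sum]
    simp only [hexp]
  simp only [hprod]
  exact ENNReal.tendsto_ofReal_atTop.comp
    (Real.tendsto_exp_atTop.comp (h.const_mul_atBot_of_neg (by norm_num)))

theorem stmt_10_general (γ : ℤ → HenonMap)
    (hlim : Filter.limsup
      (fun n : ℕ => ((((1 : ℝ) / n) * ∑ j ∈ Finset.range n,
        Real.log (‖(γ (j : ℤ)).δ‖) : ℝ) : EReal)) Filter.atTop < 0)
    (U : Set (ℂ × ℂ)) (hUne : U.Nonempty) (hUb : IsBounded U) (hUo : IsOpen U)
    (hUinv : ∀ j : ℕ, (γ (j : ℤ)).toFun '' U ⊆ U) :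
    volume (KPlus γ) = ⊤ := by
  have hjac := tendsto_prod_ofReal_inv_normSq_atTop (fun j => (γ j).hδ)
    (tendsto_sum_atBot_of_limsup_avg_neg hlim)
  have hvol : Tendsto (fun n => volume (fwd γ n ⁻¹' U)) atTop (𝓝 ⊤) := by
    simp only [volume_preimage_fwd γ _ hUo.measurableSet]
    rw [← ENNReal.top_mul (hUo.measure_pos volume hUne).ne']
    exact ENNReal.Tendsto.mul_const hjac (Or.inl ENNReal.top_ne_zero)
  refine top_le_iff.1 (le_of_tendsto' hvol fun n => measure_mono ?_)
  exact preimage_fwd_subset_KPlus hUb (fun j => mapsTo_iff_image_subset.2 (hUinv j)) n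

/-- negative limsup of average log-Jacobians plus a bounded forward
invariant nonempty open set forces `Leb₄(K_γ⁺) = ∞`. -/
theorem stmt_10 (γ : ℤ → HenonMap) (R₀ : ℝ) (hR₀ : 0 < R₀)
    (hA : ∀ R : ℝ, R₀ < R → ∃ ρ : ℝ, 1 < ρ ∧ ∀ j : ℤ, CondA (γ j) R ρ)
    (hlim : Filter.limsup
      (fun n : ℕ => ((((1 : ℝ) / n) * ∑ j ∈ Finset.range n,
        Real.log (‖(γ (j : ℤ)).δ‖) : ℝ) : EReal)) Filter.atTop < 0)
    (U : Set (ℂ × ℂ)) (hUne : U.Nonempty) (hUb : IsBounded U) (hUo : IsOpen U)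
    (hUinv : ∀ j : ℕ, (γ (j : ℤ)).toFun '' U ⊆ U) :
    volume (KPlus γ) = ⊤ :=
  stmt_10_general γ hlim U hUne hUb hUo hUinv
end
end

section
/- Let Γ be a nonempty parameter-bounded family of Hénon-form maps, and let R > 1 and ρ > 1 be such that every h ∈ Γ satisfies condition (A) for (R, ρ). Then for every sequence γ = (γ_j)_{j∈ℤ} with all γ_j ∈ Γ, the sequence of functions G_{γ,n}⁺ converges pointwise on ℂ² to a function G_γ⁺, and the convergence is uniform on (the closure of V_R⁺) uniformly over all such sequences γ; that is, sup over γ ∈ Γ^ℤ and z in the closure of V_R⁺ of |G_{γ,n}⁺(z) − G_γ⁺(z)| tends to 0 as n → ∞. -/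
open Complex Filter Set Topology MeasureTheory Bornology

noncomputable section

/-! On `closure (VPlus R)` the forward orbit stays in `VPlus R` and `log⁺ ‖z‖ = log ‖y‖`. One step
of a map of degree `d` moves `d⁻¹ log ‖y‖` away from `log ‖y‖` by at most a constant depending only
on the family bounds: from above because `‖y'‖ ≤ K ‖y‖ ^ d`, from below because
`‖y'‖ ≥ (m / 2) ‖y‖ ^ d` once `‖y‖` is large and `‖y'‖ > ‖y‖` by condition (A) otherwise.
Dividing by the degree product `≥ 2 ^ n`, the increments `G_{n+1} - G_n` are `O(2⁻ⁿ)` uniformly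
in `γ` and `z`. An orbit that never enters `VPlus R` has `‖y_n‖ ≤ max R ‖x_n‖` and
`x_{n+1} = y_n + a_n`, so it grows at most linearly and `G_n → 0`. -/

lemma Polynomial.norm_eval_sub_leadingCoeff_mul_pow_le {𝕜 : Type*} [NormedField 𝕜]
    {p : Polynomial 𝕜} {M : ℝ} (hM : ∀ i, ‖p.coeff i‖ ≤ M) {y : 𝕜} (hy : 1 ≤ ‖y‖) :
    ‖p.eval y - p.leadingCoeff * y ^ p.natDegree‖
      ≤ p.natDegree * M * ‖y‖ ^ (p.natDegree - 1) := by
  rw [Polynomial.eval_eq_sum_range, Finset.sum_range_succ, Polynomial.leadingCoeff,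
    add_sub_cancel_right]
  calc ‖∑ i ∈ Finset.range p.natDegree, p.coeff i * y ^ i‖
      ≤ ∑ i ∈ Finset.range p.natDegree, ‖p.coeff i * y ^ i‖ := norm_sum_le _ _
    _ ≤ ∑ _i ∈ Finset.range p.natDegree, M * ‖y‖ ^ (p.natDegree - 1) := by
        refine Finset.sum_le_sum fun i hi => ?_
        rw [norm_mul, norm_pow]
        have hi : i ≤ p.natDegree - 1 := by have := Finset.mem_range.mp hi; omega
        exact mul_le_mul (hM i) (pow_le_pow_right₀ hy hi) (by positivity)
          ((norm_nonneg _).trans (hM 0))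
    _ = p.natDegree * M * ‖y‖ ^ (p.natDegree - 1) := by
        rw [Finset.sum_const, Finset.card_range, nsmul_eq_mul, mul_assoc]

lemma max_le_norm_snd_of_mem_closure_VPlus {R : ℝ} {z : ℂ × ℂ} (hz : z ∈ closure (VPlus R)) :
    max R ‖z.1‖ ≤ ‖z.2‖ := by
  have hclosed : IsClosed {w : ℂ × ℂ | max R ‖w.1‖ ≤ ‖w.2‖} :=
    isClosed_le (continuous_const.max continuous_fst.norm) continuous_snd.norm
  exact closure_minimal (fun w hw => show max R ‖w.1‖ ≤ ‖w.2‖ from le_of_lt hw) hclosed hz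

lemma logPlus_norm_of_mem_closure_VPlus {R : ℝ} (hR : 1 ≤ R) {z : ℂ × ℂ}
    (hz : z ∈ closure (VPlus R)) : logPlus ‖z‖ = Real.log ‖z.2‖ := by
  obtain ⟨hRy, hxy⟩ := max_le_iff.mp (max_le_norm_snd_of_mem_closure_VPlus hz)
  rw [logPlus, Prod.norm_def, max_eq_right hxy, max_eq_left (Real.log_nonneg (hR.trans hRy))]

lemma abs_inv_mul_log_sub_log_le {d : ℕ} (hd : 1 ≤ d) {t s K c T : ℝ} (ht : 1 ≤ t)
    (hts : t ≤ s) (hsK : s ≤ K * t ^ d) (hc : 0 < c) (hcs : T ≤ t → c * t ^ d ≤ s) :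
    |(d : ℝ)⁻¹ * Real.log s - Real.log t| ≤ |Real.log K| + |Real.log T| + |Real.log c| := by
  have ht0 : 0 < t := one_pos.trans_le ht
  have hs0 : 0 < s := ht0.trans_le hts
  have htd : 0 < t ^ d := pow_pos ht0 d
  have hK : 0 < K := pos_of_mul_pos_left (hs0.trans_le hsK) htd.le
  have hinv0 : 0 < (d : ℝ)⁻¹ := by positivity
  have hshrink : ∀ a, |(d : ℝ)⁻¹ * a| ≤ |a| := fun a => by
    rw [abs_mul, abs_of_pos hinv0]
    exact mul_le_of_le_one_left (abs_nonneg a) (inv_le_one_of_one_le₀ (by exact_mod_cast hd))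
  have hlog : ∀ {a : ℝ}, 0 < a →
      (d : ℝ)⁻¹ * Real.log (a * t ^ d) = (d : ℝ)⁻¹ * Real.log a + Real.log t := fun ha => by
    rw [Real.log_mul ha.ne' htd.ne', Real.log_pow, mul_add, ← mul_assoc,
      inv_mul_cancel₀ (by positivity), one_mul]
  have hupper : (d : ℝ)⁻¹ * Real.log s - Real.log t ≤ (d : ℝ)⁻¹ * Real.log K := by
    have := mul_le_mul_of_nonneg_left (Real.log_le_log hs0 hsK) hinv0.le
    linarith [hlog hK]
  have hlower : -(|Real.log T| + |Real.log c|) ≤ (d : ℝ)⁻¹ * Real.log s - Real.log t := by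
    rcases le_or_gt T t with hTt | htT
    · have := mul_le_mul_of_nonneg_left (Real.log_le_log (by positivity) (hcs hTt)) hinv0.le
      linarith [hlog hc, neg_abs_le ((d : ℝ)⁻¹ * Real.log c), hshrink (Real.log c),
        abs_nonneg (Real.log T)]
    · have := mul_le_mul_of_nonneg_left (Real.log_le_log ht0 hts) hinv0.le
      have := mul_nonneg hinv0.le (Real.log_nonneg ht)
      linarith [Real.log_le_log ht0 htT.le, le_abs_self (Real.log T), abs_nonneg (Real.log c)]
  rw [abs_le]
  constructor
  · linarith [abs_nonneg (Real.log K)]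
  · linarith [le_abs_self ((d : ℝ)⁻¹ * Real.log K), hshrink (Real.log K),
      abs_nonneg (Real.log T), abs_nonneg (Real.log c)]

namespace HenonMap

variable {f : HenonMap} {D : ℕ} {Δ m M : ℝ} {z : ℂ × ℂ}

lemma fst_toFun (f : HenonMap) (z : ℂ × ℂ) : (f.toFun z).1 = z.2 + f.a := rfl

lemma snd_toFun (f : HenonMap) (z : ℂ × ℂ) : (f.toFun z).2 = f.p.eval z.2 - f.δ * z.1 := rfl

lemma norm_snd_toFun_le (hD : f.p.natDegree ≤ D) (hΔ : ‖f.δ‖ ≤ Δ)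
    (hM : ∀ i, ‖f.p.coeff i‖ ≤ M) (hxy : ‖z.1‖ ≤ ‖z.2‖) (hy : 1 ≤ ‖z.2‖) :
    ‖(f.toFun z).2‖ ≤ ((D + 1) * M + Δ) * ‖z.2‖ ^ f.p.natDegree := by
  set d := f.p.natDegree
  set t := ‖z.2‖
  have hd : d ≠ 0 := by have := f.hdeg; omega
  have hM0 : 0 ≤ M := (norm_nonneg _).trans (hM 0)
  have hΔ0 : 0 ≤ Δ := (norm_nonneg _).trans hΔ
  have htail := f.p.norm_eval_sub_leadingCoeff_mul_pow_le hM hy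
  have hlead : ‖f.p.leadingCoeff * z.2 ^ d‖ ≤ M * t ^ d := by
    rw [norm_mul, norm_pow]; exact mul_le_mul_of_nonneg_right (hM _) (by positivity)
  have htail' : d * M * t ^ (d - 1) ≤ D * M * t ^ d := by
    gcongr
    omega
  have hδx : ‖f.δ * z.1‖ ≤ Δ * t ^ d := by
    rw [norm_mul]
    exact mul_le_mul hΔ (hxy.trans (le_self_pow₀ hy hd)) (norm_nonneg _) hΔ0
  rw [snd_toFun]
  linarith [norm_sub_le (f.p.eval z.2) (f.δ * z.1),
    norm_sub_norm_le (f.p.eval z.2) (f.p.leadingCoeff * z.2 ^ d)]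

lemma le_norm_snd_toFun (hD : f.p.natDegree ≤ D) (hΔ : ‖f.δ‖ ≤ Δ)
    (hM : ∀ i, ‖f.p.coeff i‖ ≤ M) (hm0 : 0 < m) (hm : m ≤ ‖f.p.leadingCoeff‖)
    (hxy : ‖z.1‖ ≤ ‖z.2‖) (hy : 1 ≤ ‖z.2‖) (hT : 2 * (D * M + Δ) / m ≤ ‖z.2‖) :
    m / 2 * ‖z.2‖ ^ f.p.natDegree ≤ ‖(f.toFun z).2‖ := by
  set d := f.p.natDegree
  set t := ‖z.2‖
  have hd : d - 1 ≠ 0 := by have := f.hdeg; omega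
  have hM0 : 0 ≤ M := (norm_nonneg _).trans (hM 0)
  have htail := f.p.norm_eval_sub_leadingCoeff_mul_pow_le hM hy
  have hlead : m * t ^ d ≤ ‖f.p.leadingCoeff * z.2 ^ d‖ := by
    rw [norm_mul, norm_pow]; exact mul_le_mul_of_nonneg_right hm (by positivity)
  have htail' : d * M * t ^ (d - 1) ≤ D * M * t ^ (d - 1) := by gcongr
  have hδx : ‖f.δ * z.1‖ ≤ Δ * t ^ (d - 1) := by
    rw [norm_mul]
    exact mul_le_mul hΔ (hxy.trans (le_self_pow₀ hy hd)) (norm_nonneg _)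
      ((norm_nonneg _).trans hΔ)
  have hsmall : (D * M + Δ) * t ^ (d - 1) ≤ m / 2 * t ^ d := by
    have h : D * M + Δ ≤ m / 2 * t := by
      rw [div_le_iff₀ hm0] at hT; linarith
    calc (D * M + Δ) * t ^ (d - 1) ≤ m / 2 * t * t ^ (d - 1) := by gcongr
      _ = m / 2 * t ^ d := by rw [mul_assoc, mul_pow_sub_one (by omega)]
  rw [snd_toFun]
  linarith [norm_sub_norm_le (f.p.eval z.2) (f.δ * z.1),
    norm_sub_norm_le (f.p.leadingCoeff * z.2 ^ d) (f.p.eval z.2),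
    norm_sub_rev (f.p.leadingCoeff * z.2 ^ d) (f.p.eval z.2)]

def logGrowthConst (D : ℕ) (Δ m M : ℝ) : ℝ :=
  |Real.log ((D + 1) * M + Δ)| + |Real.log (2 * (D * M + Δ) / m)| + |Real.log (m / 2)|

def LogGrowthBound (f : HenonMap) (R C : ℝ) : Prop :=
  ∀ z ∈ closure (VPlus R),
    |(f.p.natDegree : ℝ)⁻¹ * Real.log ‖(f.toFun z).2‖ - Real.log ‖z.2‖| ≤ C

end HenonMap

lemma CondA.logGrowthBound {f : HenonMap} {R ρ : ℝ} {D : ℕ} {Δ m M : ℝ} (hA : CondA f R ρ)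
    (hR : 1 ≤ R) (hρ : 1 < ρ) (hD : f.p.natDegree ≤ D) (hΔ : ‖f.δ‖ ≤ Δ)
    (hM : ∀ i, ‖f.p.coeff i‖ ≤ M) (hm0 : 0 < m) (hm : m ≤ ‖f.p.leadingCoeff‖) :
    f.LogGrowthBound R (HenonMap.logGrowthConst D Δ m M) := by
  intro z hz
  obtain ⟨hRy, hxy⟩ := max_le_iff.mp (max_le_norm_snd_of_mem_closure_VPlus hz)
  have hy : 1 ≤ ‖z.2‖ := hR.trans hRy
  have hgrow : ‖z.2‖ ≤ ‖(f.toFun z).2‖ :=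
    (le_mul_of_one_le_left (norm_nonneg _) hρ.le).trans (hA.1 z hz).2.le
  exact abs_inv_mul_log_sub_log_le (by have := f.hdeg; omega) hy hgrow
    (f.norm_snd_toFun_le hD hΔ hM hxy hy) (by positivity)
    (f.le_norm_snd_toFun hD hΔ hM hm0 hm hxy hy)

lemma logPlus_nonneg (t : ℝ) : 0 ≤ logPlus t := le_max_right _ _

lemma logPlus_le_self {t : ℝ} (ht : 0 ≤ t) : logPlus t ≤ t := max_le (Real.log_le_self ht) ht

lemma fwd_succ (γ : ℤ → HenonMap) (n : ℕ) (z : ℂ × ℂ) :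
    fwd γ (n + 1) z = (γ n).toFun (fwd γ n z) := rfl

lemma inv_prod_natDegree_le (γ : ℤ → HenonMap) (n : ℕ) :
    (∏ j ∈ Finset.range n, ((γ j).p.natDegree : ℝ))⁻¹ ≤ 2⁻¹ ^ n := by
  rw [inv_pow]
  refine inv_anti₀ (by positivity) ?_
  calc (2 : ℝ) ^ n = ∏ _j ∈ Finset.range n, (2 : ℝ) := by simp
    _ ≤ ∏ j ∈ Finset.range n, ((γ j).p.natDegree : ℝ) :=
      Finset.prod_le_prod (by norm_num) fun j _ => by exact_mod_cast (γ j).hdeg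

lemma GPlusN_nonneg (γ : ℤ → HenonMap) (n : ℕ) (z : ℂ × ℂ) : 0 ≤ GPlusN γ n z :=
  mul_nonneg (by positivity) (logPlus_nonneg _)

section Orbit

variable {γ : ℤ → HenonMap} {R ρ C : ℝ} {z : ℂ × ℂ}

lemma fwd_mem_closure_VPlus (hA : ∀ j, CondA (γ j) R ρ) {k n : ℕ}
    (hk : fwd γ k z ∈ closure (VPlus R)) (hkn : k ≤ n) : fwd γ n z ∈ closure (VPlus R) := by
  induction n, hkn using Nat.le_induction with
  | base => exact hk
  | succ n _ ih => exact subset_closure ((hA n).1 _ ih).1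

variable (hA : ∀ j, CondA (γ j) R ρ) (hR : 1 ≤ R)
  (hstep : ∀ j, (γ j).LogGrowthBound R C)
include hA hR hstep

lemma abs_GPlusN_succ_sub_le {n : ℕ} (hn : fwd γ n z ∈ closure (VPlus R)) :
    |GPlusN γ (n + 1) z - GPlusN γ n z| ≤ C * 2⁻¹ ^ n := by
  have hlog := logPlus_norm_of_mem_closure_VPlus hR hn
  have hlog' := logPlus_norm_of_mem_closure_VPlus hR (subset_closure ((hA n).1 _ hn).1)
  have hdiff : GPlusN γ (n + 1) z - GPlusN γ n z =
      (∏ j ∈ Finset.range n, ((γ j).p.natDegree : ℝ))⁻¹ *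
        (((γ n).p.natDegree : ℝ)⁻¹ * Real.log ‖((γ n).toFun (fwd γ n z)).2‖
          - Real.log ‖(fwd γ n z).2‖) := by
    rw [GPlusN, GPlusN, fwd_succ, hlog, hlog', Finset.prod_range_succ, mul_inv]
    ring
  rw [hdiff, abs_mul, abs_of_nonneg (by positivity), mul_comm C]
  exact mul_le_mul (inv_prod_natDegree_le γ n) (hstep n _ hn) (abs_nonneg _) (by positivity)

lemma cauchySeq_GPlusN {k : ℕ} (hk : fwd γ k z ∈ closure (VPlus R)) :
    CauchySeq (GPlusN γ · z) := by
  refine (cauchySeq_shift k).mp (cauchySeq_of_le_geometric 2⁻¹ (C * 2⁻¹ ^ k) (by norm_num)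
    fun n => ?_)
  rw [Real.dist_eq, abs_sub_comm, add_right_comm, mul_assoc, ← pow_add, add_comm k]
  exact abs_GPlusN_succ_sub_le hA hR hstep (fwd_mem_closure_VPlus hA hk (by omega))

lemma abs_GPlusN_sub_le_of_tendsto (hz : z ∈ closure (VPlus R)) {G : ℝ}
    (hG : Tendsto (GPlusN γ · z) atTop (𝓝 G)) (n : ℕ) :
    |GPlusN γ n z - G| ≤ 2 * C * 2⁻¹ ^ n := by
  have h := dist_le_of_le_geometric_of_tendsto 2⁻¹ C (by norm_num) (fun n => ?_) hG n
  · rw [Real.dist_eq] at h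
    exact h.trans_eq (by ring)
  rw [Real.dist_eq, abs_sub_comm]
  exact abs_GPlusN_succ_sub_le hA hR hstep (fwd_mem_closure_VPlus hA (k := 0) hz n.zero_le)

end Orbit

section Escape

variable {γ : ℤ → HenonMap} {R A : ℝ} {z : ℂ × ℂ}

lemma norm_fwd_le_of_forall_not_mem_VPlus (ha : ∀ j, ‖(γ j).a‖ ≤ A)
    (hout : ∀ n, fwd γ n z ∉ VPlus R) (n : ℕ) : ‖fwd γ n z‖ ≤ max R ‖z‖ + n * A := by
  have hA0 : 0 ≤ A := (norm_nonneg _).trans (ha 0)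
  have hy : ∀ n, ‖(fwd γ n z).2‖ ≤ max R ‖(fwd γ n z).1‖ := fun n => not_lt.mp (hout n)
  have hx : ∀ n : ℕ, max R ‖(fwd γ n z).1‖ ≤ max R ‖z‖ + n * A := by
    intro n
    induction n with
    | zero => simpa [fwd] using max_le_max le_rfl (norm_fst_le z)
    | succ n ih =>
      rw [fwd_succ, HenonMap.fst_toFun, Nat.cast_succ]
      refine max_le ?_ ?_
      · nlinarith [le_max_left R ‖z‖, Nat.cast_nonneg (α := ℝ) n]
      · linarith [norm_add_le (fwd γ n z).2 (γ n).a, hy n, ha n]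
  rw [Prod.norm_def]
  exact max_le ((le_max_right _ _).trans (hx n)) ((hy n).trans (hx n))

lemma tendsto_GPlusN_zero_of_forall_not_mem_VPlus (ha : ∀ j, ‖(γ j).a‖ ≤ A)
    (hout : ∀ n, fwd γ n z ∉ VPlus R) : Tendsto (GPlusN γ · z) atTop (𝓝 0) := by
  set B := max R ‖z‖
  have hbound : ∀ n : ℕ, GPlusN γ n z ≤ B * 2⁻¹ ^ n + A * (n * 2⁻¹ ^ n) := fun n => by
    have hlog : logPlus ‖fwd γ n z‖ ≤ B + n * A :=
      (logPlus_le_self (norm_nonneg _)).trans (norm_fwd_le_of_forall_not_mem_VPlus ha hout n)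
    calc GPlusN γ n z ≤ 2⁻¹ ^ n * (B + n * A) :=
          mul_le_mul (inv_prod_natDegree_le γ n) hlog (logPlus_nonneg _) (by positivity)
      _ = B * 2⁻¹ ^ n + A * (n * 2⁻¹ ^ n) := by ring
  have h2 : (2 : ℝ)⁻¹ < 1 := by norm_num
  have hlim : Tendsto (fun n : ℕ => B * 2⁻¹ ^ n + A * (n * 2⁻¹ ^ n)) atTop (𝓝 0) := by
    simpa using ((tendsto_pow_atTop_nhds_zero_of_lt_one (by norm_num) h2).const_mul B).add
      ((tendsto_self_mul_const_pow_of_lt_one (by norm_num) h2).const_mul A)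
  exact tendsto_of_tendsto_of_tendsto_of_le_of_le tendsto_const_nhds hlim
    (GPlusN_nonneg γ · z) hbound

end Escape

lemma exists_tendsto_GPlusN {γ : ℤ → HenonMap} {R ρ C A : ℝ} (hA : ∀ j, CondA (γ j) R ρ)
    (hR : 1 ≤ R) (hstep : ∀ j, (γ j).LogGrowthBound R C) (ha : ∀ j, ‖(γ j).a‖ ≤ A)
    (z : ℂ × ℂ) :
    ∃ G, Tendsto (GPlusN γ · z) atTop (𝓝 G) := by
  by_cases h : ∃ k, fwd γ k z ∈ VPlus R
  · obtain ⟨k, hk⟩ := h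
    exact cauchySeq_tendsto_of_complete (cauchySeq_GPlusN hA hR hstep (subset_closure hk))
  · push Not at h
    exact ⟨0, tendsto_GPlusN_zero_of_forall_not_mem_VPlus ha h⟩

theorem stmt_11_general (Γ : Set HenonMap) (hΓ : ParamBounded Γ)
    (R ρ : ℝ) (hR : 1 < R) (hρ : 1 < ρ) (hA : ∀ h ∈ Γ, CondA h R ρ) :
    ∃ G : (ℤ → HenonMap) → (ℂ × ℂ) → ℝ,
      (∀ γ : ℤ → HenonMap, (∀ j : ℤ, γ j ∈ Γ) → ∀ z : ℂ × ℂ,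
        Filter.Tendsto (fun n : ℕ => GPlusN γ n z) Filter.atTop (nhds (G γ z))) ∧
      (∀ ε : ℝ, 0 < ε → ∃ N : ℕ, ∀ n : ℕ, N ≤ n →
        ∀ γ : ℤ → HenonMap, (∀ j : ℤ, γ j ∈ Γ) →
          ∀ z ∈ closure (VPlus R), |GPlusN γ n z - G γ z| < ε) := by
  obtain ⟨D, A, _, Δ, m, M, -, -, -, -, hm0, -, hbd⟩ := hΓ
  set C := HenonMap.logGrowthConst D Δ m M
  have hstep : ∀ f ∈ Γ, f.LogGrowthBound R C := fun f hf =>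
    let ⟨hD, _, _, hΔ, hM, hm⟩ := hbd f hf
    (hA f hf).logGrowthBound hR.le hρ hD hΔ hM hm0 hm
  have hconv : ∀ γ : ℤ → HenonMap, (∀ j, γ j ∈ Γ) →
      ∀ z, Tendsto (GPlusN γ · z) atTop (𝓝 (limUnder atTop (GPlusN γ · z))) :=
    fun γ hγ z => tendsto_nhds_limUnder <| exists_tendsto_GPlusN (fun j => hA _ (hγ j)) hR.le
      (fun j => hstep _ (hγ j)) (fun j => (hbd _ (hγ j)).2.1) z
  refine ⟨fun γ z => limUnder atTop (GPlusN γ · z), hconv, fun ε hε => ?_⟩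
  have hgeom : Tendsto (fun n : ℕ => 2 * C * 2⁻¹ ^ n) atTop (𝓝 0) := by
    simpa using (tendsto_pow_atTop_nhds_zero_of_lt_one (by norm_num)
      (by norm_num : (2 : ℝ)⁻¹ < 1)).const_mul (2 * C)
  obtain ⟨N, hN⟩ := eventually_atTop.mp (hgeom.eventually (gt_mem_nhds hε))
  exact ⟨N, fun n hn γ hγ z hz => (abs_GPlusN_sub_le_of_tendsto (fun j => hA _ (hγ j)) hR.le
    (fun j => hstep _ (hγ j)) hz (hconv γ hγ z) n).trans_lt (hN n hn)⟩

/-- existence of the Green's function `G_γ⁺` as pointwise limit of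
`G_{γ,n}⁺`, with uniform convergence on the closure of `V_R⁺`, uniformly in `γ`. -/
theorem stmt_11 (Γ : Set HenonMap) (hne : Γ.Nonempty) (hΓ : ParamBounded Γ)
    (R ρ : ℝ) (hR : 1 < R) (hρ : 1 < ρ) (hA : ∀ h ∈ Γ, CondA h R ρ) :
    ∃ G : (ℤ → HenonMap) → (ℂ × ℂ) → ℝ,
      (∀ γ : ℤ → HenonMap, (∀ j : ℤ, γ j ∈ Γ) → ∀ z : ℂ × ℂ,
        Filter.Tendsto (fun n : ℕ => GPlusN γ n z) Filter.atTop (nhds (G γ z))) ∧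
      (∀ ε : ℝ, 0 < ε → ∃ N : ℕ, ∀ n : ℕ, N ≤ n →
        ∀ γ : ℤ → HenonMap, (∀ j : ℤ, γ j ∈ Γ) →
          ∀ z ∈ closure (VPlus R), |GPlusN γ n z - G γ z| < ε) :=
  stmt_11_general Γ hΓ R ρ hR hρ hA
end
end

section
/- Let Γ be a nonempty parameter-bounded family of Hénon-form maps, and let R > 1 and ρ > 1 be such that every h ∈ Γ satisfies condition (A) for (R, ρ). For γ ∈ Γ^ℤ let G_γ⁺ be the pointwise limit of G_{γ,n}⁺ on ℂ² (which exists). Then for every A > R, setting C^A := {(x,y) ∈ ℂ² : |x| ≤ A} ∩ closure(D_R ∪ V_R⁻), one has sup over γ ∈ Γ^ℤ and z ∈ C^A of |G_{γ,n}⁺(z) − G_γ⁺(z)| → 0 as n → ∞. In particular, for every compact set E ⊆ ℂ², G_{γ,n}⁺ → G_γ⁺ uniformly on E, uniformly over γ ∈ Γ^ℤ. -/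
open Complex Filter Set Topology MeasureTheory Bornology

noncomputable section

/-!
Write `w_n = γ_{n-1,0}(z)` and `d_n = deg γ_n`. Then
`G_{γ,n+1}⁺(z) - G_{γ,n}⁺(z) = (d_0 ⋯ d_{n-1})⁻¹ (d_n⁻¹ log⁺‖γ_n(w_n)‖ - log⁺‖w_n‖)`,
and the prefactor is at most `2⁻ⁿ`. Uniformly over the family, the bracket is bounded by a
constant when `w_n` lies in the cone `|x| ≤ |y|` (there the leading term of `p` dominates, so
`‖γ_n(w_n)‖` is comparable to `‖w_n‖ ^ d_n`), and by a constant plus `log⁺‖w_n‖` in general.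
As `V_R⁺` is forward invariant, an orbit that is not in `V_R⁺` at time `n` has never been
there, and each step only translates the previous second coordinate; this gives
`‖w_n‖ ≤ max(R, ‖z‖) + n A`. So the increments are dominated by the summable sequence
`(C + max(R, S) + n A) 2⁻ⁿ` whenever `‖z‖ ≤ S`, and its tail sums give a rate of convergence
that is uniform in `γ` and `z`. Both `C^A` and compact sets are bounded.
-/

open scoped Real

theorem logPlus_eq_posLog : logPlus = Real.posLog :=
  funext fun t => by unfold logPlus; rw [Real.posLog_apply, max_comm]

theorem Real.posLog_le_self {t : ℝ} (ht : 0 ≤ t) : log⁺ t ≤ t :=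
  max_le ht (Real.log_le_self ht)

theorem Real.posLog_max_one {t : ℝ} (ht : 0 ≤ t) : log⁺ (max 1 t) = log⁺ t := by
  rw [Real.posLog_eq_log_max_one ht, Real.posLog_eq_log_max_one (ht.trans (le_max_right _ _)),
    ← max_assoc, max_self]

namespace Polynomial

variable {𝕜 : Type*} [NormedField 𝕜] {p : 𝕜[X]} {M : ℝ}

theorem norm_eval_le_of_norm_coeff_le (hcoeff : ∀ i, ‖p.coeff i‖ ≤ M) (y : 𝕜) :
    ‖p.eval y‖ ≤ (p.natDegree + 1) * M * max 1 ‖y‖ ^ p.natDegree := by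
  have hM : 0 ≤ M := (norm_nonneg _).trans (hcoeff 0)
  rw [eval_eq_sum_range]
  calc ‖∑ i ∈ Finset.range (p.natDegree + 1), p.coeff i * y ^ i‖
      ≤ ∑ _i ∈ Finset.range (p.natDegree + 1), M * max 1 ‖y‖ ^ p.natDegree := by
        refine (norm_sum_le _ _).trans (Finset.sum_le_sum fun i hi => ?_)
        rw [norm_mul, norm_pow]
        gcongr
        · exact hcoeff i
        · calc ‖y‖ ^ i ≤ max 1 ‖y‖ ^ i := by gcongr; exact le_max_right _ _
            _ ≤ _ := pow_le_pow_right₀ (le_max_left _ _) (Finset.mem_range_succ_iff.mp hi)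
    _ = _ := by simp; ring

theorem norm_leadingCoeff_mul_pow_le (hcoeff : ∀ i, ‖p.coeff i‖ ≤ M) {y : 𝕜} (hy : 1 ≤ ‖y‖) :
    ‖p.leadingCoeff‖ * ‖y‖ ^ p.natDegree ≤
      ‖p.eval y‖ + p.natDegree * M * ‖y‖ ^ (p.natDegree - 1) := by
  have hM : 0 ≤ M := (norm_nonneg _).trans (hcoeff 0)
  have hlower : ‖∑ i ∈ Finset.range p.natDegree, p.coeff i * y ^ i‖ ≤
      p.natDegree * M * ‖y‖ ^ (p.natDegree - 1) :=
    calc ‖∑ i ∈ Finset.range p.natDegree, p.coeff i * y ^ i‖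
        ≤ ∑ _i ∈ Finset.range p.natDegree, M * ‖y‖ ^ (p.natDegree - 1) := by
          refine (norm_sum_le _ _).trans (Finset.sum_le_sum fun i hi => ?_)
          rw [norm_mul, norm_pow]
          have : i ≤ p.natDegree - 1 := by have := Finset.mem_range.mp hi; omega
          gcongr
          exact hcoeff i
      _ = _ := by simp; ring
  have heval : p.leadingCoeff * y ^ p.natDegree =
      p.eval y - ∑ i ∈ Finset.range p.natDegree, p.coeff i * y ^ i := by
    rw [eval_eq_sum_range, Finset.sum_range_succ, coeff_natDegree]; ring
  calc ‖p.leadingCoeff‖ * ‖y‖ ^ p.natDegree = ‖p.leadingCoeff * y ^ p.natDegree‖ := by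
        rw [norm_mul, norm_pow]
    _ ≤ _ := by rw [heval]; exact (norm_sub_le _ _).trans (add_le_add_right hlower _)

end Polynomial

namespace HenonMap

variable (f : HenonMap) {D : ℕ} {A Δ M m : ℝ}

theorem norm_toFun_le (hD : f.p.natDegree ≤ D) (ha : ‖f.a‖ ≤ A) (hδ : ‖f.δ‖ ≤ Δ)
    (hcoeff : ∀ i, ‖f.p.coeff i‖ ≤ M) (w : ℂ × ℂ) :
    ‖f.toFun w‖ ≤ ((D + 1) * M + Δ + A + 1) * max 1 ‖w‖ ^ f.p.natDegree := by
  set c := max 1 ‖w‖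
  have hc : 1 ≤ c := le_max_left _ _
  have hM : 0 ≤ M := (norm_nonneg _).trans (hcoeff 0)
  have hΔ : 0 ≤ Δ := (norm_nonneg _).trans hδ
  have hA : 0 ≤ A := (norm_nonneg _).trans ha
  have hx : ‖w.1‖ ≤ c := (norm_fst_le w).trans (le_max_right _ _)
  have hy : ‖w.2‖ ≤ c := (norm_snd_le w).trans (le_max_right _ _)
  have hcd : c ≤ c ^ f.p.natDegree := le_self_pow₀ hc (by have := f.hdeg; omega)
  have hdD : (f.p.natDegree : ℝ) + 1 ≤ D + 1 := by gcongr
  have heval : ‖f.p.eval w.2‖ ≤ (D + 1) * M * c ^ f.p.natDegree :=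
    calc ‖f.p.eval w.2‖ ≤ (f.p.natDegree + 1) * M * max 1 ‖w.2‖ ^ f.p.natDegree :=
          Polynomial.norm_eval_le_of_norm_coeff_le hcoeff w.2
      _ ≤ (D + 1) * M * c ^ f.p.natDegree := by gcongr; exact max_le hc hy
  have hfst : ‖w.2 + f.a‖ ≤ (A + 1) * c ^ f.p.natDegree :=
    calc ‖w.2 + f.a‖ ≤ c + A := (norm_add_le _ _).trans (add_le_add hy ha)
      _ ≤ (A + 1) * c := by nlinarith
      _ ≤ _ := by gcongr
  have hsnd : ‖f.p.eval w.2 - f.δ * w.1‖ ≤ ((D + 1) * M + Δ) * c ^ f.p.natDegree :=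
    calc ‖f.p.eval w.2 - f.δ * w.1‖ ≤ ‖f.p.eval w.2‖ + ‖f.δ‖ * ‖w.1‖ :=
          (norm_sub_le _ _).trans_eq (by rw [norm_mul])
      _ ≤ (D + 1) * M * c ^ f.p.natDegree + Δ * c ^ f.p.natDegree := by
          gcongr; exact hx.trans hcd
      _ = _ := by ring
  have hpow : 0 ≤ c ^ f.p.natDegree := by positivity
  have hDM : 0 ≤ ((D : ℝ) + 1) * M := by positivity
  exact max_le (hfst.trans (mul_le_mul_of_nonneg_right (by linarith) hpow))
    (hsnd.trans (mul_le_mul_of_nonneg_right (by linarith) hpow))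

theorem posLog_norm_toFun_le (hD : f.p.natDegree ≤ D) (ha : ‖f.a‖ ≤ A) (hδ : ‖f.δ‖ ≤ Δ)
    (hcoeff : ∀ i, ‖f.p.coeff i‖ ≤ M) (w : ℂ × ℂ) :
    log⁺ ‖f.toFun w‖ ≤ log⁺ ((D + 1) * M + Δ + A + 1) + f.p.natDegree * log⁺ ‖w‖ :=
  calc log⁺ ‖f.toFun w‖
      ≤ log⁺ (((D + 1) * M + Δ + A + 1) * max 1 ‖w‖ ^ f.p.natDegree) :=
        Real.posLog_le_posLog (norm_nonneg _) (f.norm_toFun_le hD ha hδ hcoeff w)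
    _ ≤ log⁺ ((D + 1) * M + Δ + A + 1) + log⁺ (max 1 ‖w‖ ^ f.p.natDegree) := Real.posLog_mul
    _ = _ := by rw [Real.posLog_pow, Real.posLog_max_one (norm_nonneg w)]

theorem mul_pow_le_norm_toFun (hD : f.p.natDegree ≤ D) (hδ : ‖f.δ‖ ≤ Δ)
    (hcoeff : ∀ i, ‖f.p.coeff i‖ ≤ M) {w : ℂ × ℂ} (hw : ‖w.1‖ ≤ ‖w.2‖) (hw₁ : 1 ≤ ‖w.2‖)
    (hlarge : 2 * (D * M + Δ) ≤ ‖f.p.leadingCoeff‖ * ‖w.2‖) :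
    ‖f.p.leadingCoeff‖ / 2 * ‖w‖ ^ f.p.natDegree ≤ ‖f.toFun w‖ := by
  set d := f.p.natDegree
  set Y := ‖w.2‖
  have hM : 0 ≤ M := (norm_nonneg _).trans (hcoeff 0)
  have hwY : ‖w‖ = Y := by rw [Prod.norm_def, max_eq_right hw]
  have hYd : Y ^ d = Y * Y ^ (d - 1) := by
    rw [← pow_succ']; congr 1; have := f.hdeg; omega
  have hY : Y ≤ Y ^ (d - 1) := le_self_pow₀ hw₁ (by have := f.hdeg; omega)
  have hlead : ‖f.p.leadingCoeff‖ * Y ^ d ≤ ‖f.p.eval w.2‖ + d * M * Y ^ (d - 1) :=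
    Polynomial.norm_leadingCoeff_mul_pow_le hcoeff hw₁
  have hδx : ‖f.δ * w.1‖ ≤ Δ * Y ^ (d - 1) := by
    rw [norm_mul]; exact mul_le_mul hδ (hw.trans hY) (norm_nonneg _) ((norm_nonneg _).trans hδ)
  have hdM : (d : ℝ) * M ≤ D * M := by gcongr
  have hsnd : ‖f.p.eval w.2‖ - ‖f.δ * w.1‖ ≤ ‖(f.toFun w).2‖ := norm_sub_norm_le _ _
  rw [hwY]
  refine le_trans ?_ (hsnd.trans (norm_snd_le _))
  have h0 : 0 ≤ Y ^ (d - 1) := by positivity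
  rw [hYd] at hlead ⊢
  nlinarith [mul_le_mul_of_nonneg_right hlarge h0, mul_le_mul_of_nonneg_right hdM h0]

theorem mul_posLog_norm_le_of_norm_fst_le (hD : f.p.natDegree ≤ D) (hδ : ‖f.δ‖ ≤ Δ)
    (hcoeff : ∀ i, ‖f.p.coeff i‖ ≤ M) (hm : 0 < m) (hlead : m ≤ ‖f.p.leadingCoeff‖)
    {w : ℂ × ℂ} (hw : ‖w.1‖ ≤ ‖w.2‖) :
    f.p.natDegree * log⁺ ‖w‖ ≤
      log⁺ ‖f.toFun w‖ + log⁺ (2 / m) + f.p.natDegree * log⁺ (2 * (D * M + Δ) / m) := by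
  -- beyond the radius `r` the leading term of `p` dominates: `‖f w‖ ≥ (m / 2) ‖w‖ ^ d`
  set r := 2 * (D * M + Δ) / m
  have hM : 0 ≤ M := (norm_nonneg _).trans (hcoeff 0)
  have hΔ : 0 ≤ Δ := (norm_nonneg _).trans hδ
  have hr : 0 ≤ r := by positivity
  have hlogs : 0 ≤ log⁺ ‖f.toFun w‖ + log⁺ (2 / m) :=
    add_nonneg Real.posLog_nonneg Real.posLog_nonneg
  by_cases hsmall : ‖w‖ ≤ max 1 r
  · have : log⁺ ‖w‖ ≤ log⁺ r :=
      (Real.posLog_le_posLog (norm_nonneg w) hsmall).trans_eq (Real.posLog_max_one hr)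
    have := mul_le_mul_of_nonneg_left this (Nat.cast_nonneg f.p.natDegree)
    linarith
  rw [not_le, max_lt_iff] at hsmall
  have hwY : ‖w‖ = ‖w.2‖ := by rw [Prod.norm_def, max_eq_right hw]
  have hlarge : 2 * (D * M + Δ) ≤ ‖f.p.leadingCoeff‖ * ‖w.2‖ := by
    rw [div_lt_iff₀ hm] at hsmall
    nlinarith [norm_nonneg w]
  have hnorm : m / 2 * ‖w‖ ^ f.p.natDegree ≤ ‖f.toFun w‖ :=
    le_trans (by gcongr) (f.mul_pow_le_norm_toFun hD hδ hcoeff hw (hwY ▸ hsmall.1.le) hlarge)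
  have hlog : Real.log (m / 2) + f.p.natDegree * Real.log ‖w‖ ≤ log⁺ ‖f.toFun w‖ := by
    have hpow : 0 < ‖w‖ ^ f.p.natDegree := pow_pos (by linarith [hsmall.1]) _
    rw [← Real.log_pow, ← Real.log_mul (half_pos hm).ne' hpow.ne']
    exact (Real.log_le_log (mul_pos (half_pos hm) hpow) hnorm).trans (le_max_right _ _)
  have hinv : -log⁺ (2 / m) ≤ Real.log (m / 2) := by
    rw [← inv_div 2 m, Real.log_inv, neg_le_neg_iff]; exact le_max_right _ _
  rw [Real.posLog_eq_log (by rw [abs_norm]; exact hsmall.1.le)]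
  have := mul_nonneg (Nat.cast_nonneg (α := ℝ) f.p.natDegree) (Real.posLog_nonneg (x := r))
  linarith

theorem inv_natDegree_mul_posLog_norm_toFun_le (hD : f.p.natDegree ≤ D) (ha : ‖f.a‖ ≤ A)
    (hδ : ‖f.δ‖ ≤ Δ) (hcoeff : ∀ i, ‖f.p.coeff i‖ ≤ M) (w : ℂ × ℂ) :
    (f.p.natDegree : ℝ)⁻¹ * log⁺ ‖f.toFun w‖ ≤
      log⁺ ((D + 1) * M + Δ + A + 1) + log⁺ ‖w‖ := by
  have hd : (1 : ℝ) ≤ f.p.natDegree := by exact_mod_cast le_trans (by norm_num) f.hdeg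
  rw [inv_mul_le_iff₀ (by linarith)]
  have := f.posLog_norm_toFun_le hD ha hδ hcoeff w
  have : log⁺ ((D + 1) * M + Δ + A + 1) ≤ f.p.natDegree * log⁺ ((D + 1) * M + Δ + A + 1) :=
    le_mul_of_one_le_left Real.posLog_nonneg hd
  linarith

theorem abs_inv_natDegree_mul_posLog_norm_toFun_sub_le (hD : f.p.natDegree ≤ D)
    (ha : ‖f.a‖ ≤ A) (hδ : ‖f.δ‖ ≤ Δ) (hcoeff : ∀ i, ‖f.p.coeff i‖ ≤ M) (w : ℂ × ℂ) :
    |(f.p.natDegree : ℝ)⁻¹ * log⁺ ‖f.toFun w‖ - log⁺ ‖w‖| ≤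
      log⁺ ((D + 1) * M + Δ + A + 1) + log⁺ ‖w‖ := by
  have := f.inv_natDegree_mul_posLog_norm_toFun_le hD ha hδ hcoeff w
  have : 0 ≤ (f.p.natDegree : ℝ)⁻¹ * log⁺ ‖f.toFun w‖ := by
    have := Real.posLog_nonneg (x := ‖f.toFun w‖); positivity
  have := Real.posLog_nonneg (x := (D + 1) * M + Δ + A + 1)
  rw [abs_le]; constructor <;> linarith [Real.posLog_nonneg (x := ‖w‖)]

structure Bounds (D : ℕ) (A Δ M m : ℝ) (f : HenonMap) : Prop where
  natDegree_le : f.p.natDegree ≤ D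
  norm_a_le : ‖f.a‖ ≤ A
  norm_δ_le : ‖f.δ‖ ≤ Δ
  norm_coeff_le : ∀ i, ‖f.p.coeff i‖ ≤ M
  le_norm_leadingCoeff : m ≤ ‖f.p.leadingCoeff‖

theorem Bounds.abs_inv_natDegree_mul_posLog_norm_toFun_sub_le_of_norm_fst_le
    {f : HenonMap} (hf : f.Bounds D A Δ M m) (hm : 0 < m) {w : ℂ × ℂ} (hw : ‖w.1‖ ≤ ‖w.2‖) :
    |(f.p.natDegree : ℝ)⁻¹ * log⁺ ‖f.toFun w‖ - log⁺ ‖w‖| ≤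
      log⁺ ((D + 1) * M + Δ + A + 1) + log⁺ (2 / m) + log⁺ (2 * (D * M + Δ) / m) := by
  have hd : (0 : ℝ) < f.p.natDegree := by exact_mod_cast lt_of_lt_of_le (by norm_num) f.hdeg
  have hupper := f.inv_natDegree_mul_posLog_norm_toFun_le hf.natDegree_le hf.norm_a_le
    hf.norm_δ_le hf.norm_coeff_le w
  have hlower := f.mul_posLog_norm_le_of_norm_fst_le hf.natDegree_le hf.norm_δ_le
    hf.norm_coeff_le hm hf.le_norm_leadingCoeff hw
  have hlower' : log⁺ ‖w‖ - (f.p.natDegree : ℝ)⁻¹ * log⁺ ‖f.toFun w‖ ≤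
      log⁺ (2 / m) + log⁺ (2 * (D * M + Δ) / m) := by
    refine le_of_mul_le_mul_left ?_ hd
    rw [mul_sub, ← mul_assoc, mul_inv_cancel₀ hd.ne', one_mul]
    have : log⁺ (2 / m) ≤ f.p.natDegree * log⁺ (2 / m) :=
      le_mul_of_one_le_left Real.posLog_nonneg (by exact_mod_cast le_trans (by norm_num) f.hdeg)
    linarith
  rw [abs_le]; constructor <;> linarith [Real.posLog_nonneg (x := (D + 1) * M + Δ + A + 1),
    Real.posLog_nonneg (x := 2 / m), Real.posLog_nonneg (x := 2 * (D * M + Δ) / m)]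

end HenonMap

theorem ParamBounded.exists_bounds {Γ : Set HenonMap} (hΓ : ParamBounded Γ) :
    ∃ (D : ℕ) (A Δ M m : ℝ), 0 < m ∧ ∀ f ∈ Γ, f.Bounds D A Δ M m := by
  obtain ⟨D, A, _, Δ, m, M, -, -, -, -, hm, -, hbd⟩ := hΓ
  exact ⟨D, A, Δ, M, m, hm, fun f hf =>
    let ⟨hD, ha, _, hδ, hcoeff, hlead⟩ := hbd f hf; ⟨hD, ha, hδ, hcoeff, hlead⟩⟩

theorem CondA.mapsTo_VPlus {f : HenonMap} {R ρ : ℝ} (hf : CondA f R ρ) :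
    MapsTo f.toFun (VPlus R) (VPlus R) :=
  fun _ hz => (hf.1 _ (subset_closure hz)).1

theorem norm_le_of_mem_closure_DDisk_union_VMinus {R : ℝ} {z : ℂ × ℂ}
    (hz : z ∈ closure (DDisk R ∪ VMinus R)) : ‖z.2‖ ≤ max R ‖z.1‖ := by
  refine closure_minimal (s := DDisk R ∪ VMinus R) (t := {w | ‖w.2‖ ≤ max R ‖w.1‖})
    (fun w hw => ?_) ?_ hz
  · rcases hw with hw | hw
    · have hw : max ‖w.1‖ ‖w.2‖ < R := hw
      exact ((le_max_right _ _).trans hw.le).trans (le_max_left _ _)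
    · have hw : max R ‖w.2‖ < ‖w.1‖ := hw
      exact ((le_max_right _ _).trans hw.le).trans (le_max_right _ _)
  · exact isClosed_le (by fun_prop) (by fun_prop)

theorem norm_fwd_le_of_notMem_VPlus {γ : ℤ → HenonMap} {A R : ℝ}
    (hV : ∀ j, MapsTo (γ j).toFun (VPlus R) (VPlus R))
    (ha : ∀ j, ‖(γ j).a‖ ≤ A) (z : ℂ × ℂ) {n : ℕ} (hn : fwd γ n z ∉ VPlus R) :
    ‖fwd γ n z‖ ≤ max R ‖z‖ + n * A := by
  induction n with
  | zero => simp [fwd]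
  | succ n ih =>
    have hA : 0 ≤ A := (norm_nonneg _).trans (ha 0)
    have hprev : ‖fwd γ n z‖ ≤ max R ‖z‖ + n * A := ih fun h => hn (hV n h)
    have hfst : ‖(fwd γ (n + 1) z).1‖ ≤ max R ‖z‖ + (n + 1) * A :=
      calc ‖(fwd γ n z).2 + (γ n).a‖ ≤ ‖fwd γ n z‖ + A :=
            (norm_add_le _ _).trans (add_le_add (norm_snd_le _) (ha n))
        _ ≤ _ := by linarith
    have hsnd : ‖(fwd γ (n + 1) z).2‖ ≤ max R ‖(fwd γ (n + 1) z).1‖ := not_lt.mp hn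
    have hR : R ≤ max R ‖z‖ + (n + 1) * A := by
      have : 0 ≤ ((n : ℝ) + 1) * A := by positivity
      linarith [le_max_left R ‖z‖]
    rw [Prod.norm_def]; push_cast
    exact max_le hfst (hsnd.trans (max_le hR hfst))

theorem GPlusN_succ_sub (γ : ℤ → HenonMap) (n : ℕ) (z : ℂ × ℂ) :
    GPlusN γ (n + 1) z - GPlusN γ n z =
      (∏ j ∈ Finset.range n, ((γ j).p.natDegree : ℝ))⁻¹ *
        (((γ n).p.natDegree : ℝ)⁻¹ * log⁺ ‖(γ n).toFun (fwd γ n z)‖ - log⁺ ‖fwd γ n z‖) := by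
  simp only [GPlusN, logPlus_eq_posLog, Finset.prod_range_succ, mul_inv, fwd]
  ring

theorem two_pow_le_prod_natDegree (γ : ℤ → HenonMap) (n : ℕ) :
    (2 : ℝ) ^ n ≤ ∏ j ∈ Finset.range n, ((γ j).p.natDegree : ℝ) := by
  calc (2 : ℝ) ^ n = ∏ _j ∈ Finset.range n, (2 : ℝ) := by simp
    _ ≤ _ := Finset.prod_le_prod (by norm_num) fun j _ => by exact_mod_cast (γ j).hdeg

section Convergence

variable {D : ℕ} {A Δ M m R : ℝ}

theorem exists_abs_GPlusN_succ_sub_le (hm : 0 < m) :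
    ∃ C : ℝ, ∀ γ : ℤ → HenonMap, (∀ j, (γ j).Bounds D A Δ M m) →
      (∀ j, MapsTo (γ j).toFun (VPlus R) (VPlus R)) → ∀ (z : ℂ × ℂ) (n : ℕ),
        |GPlusN γ (n + 1) z - GPlusN γ n z| ≤ (C + max R ‖z‖ + n * A) * (1 / 2) ^ n := by
  set C := log⁺ ((D + 1) * M + Δ + A + 1) + log⁺ (2 / m) + log⁺ (2 * (D * M + Δ) / m)
  refine ⟨C, fun γ hbd hV z n => ?_⟩
  set w := fwd γ n z
  have hnA : 0 ≤ n * A := mul_nonneg n.cast_nonneg ((norm_nonneg _).trans (hbd 0).norm_a_le)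
  have hRz : 0 ≤ max R ‖z‖ := (norm_nonneg z).trans (le_max_right _ _)
  have hlogs : 0 ≤ log⁺ (2 / m) + log⁺ (2 * (D * M + Δ) / m) :=
    add_nonneg Real.posLog_nonneg Real.posLog_nonneg
  have hC : 0 ≤ C :=
    add_nonneg (add_nonneg Real.posLog_nonneg Real.posLog_nonneg) Real.posLog_nonneg
  have hdefect : |((γ n).p.natDegree : ℝ)⁻¹ * log⁺ ‖(γ n).toFun w‖ - log⁺ ‖w‖| ≤
      C + max R ‖z‖ + n * A := by
    by_cases hw : w ∈ VPlus R
    · have hw' : ‖w.1‖ ≤ ‖w.2‖ := (le_max_right _ _).trans (le_of_lt hw)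
      linarith [(hbd n).abs_inv_natDegree_mul_posLog_norm_toFun_sub_le_of_norm_fst_le hm hw']
    · have hbound := (γ n).abs_inv_natDegree_mul_posLog_norm_toFun_sub_le (hbd n).natDegree_le
        (hbd n).norm_a_le (hbd n).norm_δ_le (hbd n).norm_coeff_le w
      have hlog := Real.posLog_le_self (norm_nonneg w)
      have horbit := norm_fwd_le_of_notMem_VPlus hV (fun j => (hbd j).norm_a_le) z hw
      linarith
  have hprod := two_pow_le_prod_natDegree γ n
  have hprod_pos : 0 < ∏ j ∈ Finset.range n, ((γ j).p.natDegree : ℝ) :=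
    lt_of_lt_of_le (by positivity) hprod
  rw [GPlusN_succ_sub, abs_mul, abs_inv, abs_of_pos hprod_pos, mul_comm, one_div, inv_pow]
  exact mul_le_mul hdefect (inv_anti₀ (by positivity) hprod) (by positivity) (by linarith)

theorem exists_forall_abs_GPlusN_sub_lt {Γ : Set HenonMap} (hm : 0 < m)
    (hbd : ∀ f ∈ Γ, f.Bounds D A Δ M m) (hV : ∀ f ∈ Γ, MapsTo f.toFun (VPlus R) (VPlus R))
    {G : (ℤ → HenonMap) → (ℂ × ℂ) → ℝ}
    (hG : ∀ γ : ℤ → HenonMap, (∀ j, γ j ∈ Γ) → ∀ z,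
      Tendsto (fun n => GPlusN γ n z) atTop (𝓝 (G γ z)))
    (S : ℝ) {ε : ℝ} (hε : 0 < ε) :
    ∃ N : ℕ, ∀ n ≥ N, ∀ γ : ℤ → HenonMap, (∀ j, γ j ∈ Γ) →
      ∀ z : ℂ × ℂ, ‖z‖ ≤ S → |GPlusN γ n z - G γ z| < ε := by
  obtain ⟨C, hC⟩ := exists_abs_GPlusN_succ_sub_le (D := D) (A := A) (Δ := Δ) (M := M) (R := R) hm
  set b : ℕ → ℝ := fun k => (C + max R S + k * A) * (1 / 2) ^ k
  have hb : Summable b :=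
    ((summable_geometric_two.mul_left (C + max R S)).add
      ((summable_pow_mul_geometric_of_norm_lt_one 1 (r := (1 / 2 : ℝ)) (by norm_num)).mul_left
        A)).congr fun k => by simp only [b]; ring
  obtain ⟨N, hN⟩ := eventually_atTop.mp ((tendsto_sum_nat_add b).eventually (gt_mem_nhds hε))
  refine ⟨N, fun n hn γ hγ z hz => ?_⟩
  have hstep (k : ℕ) : dist (GPlusN γ k z) (GPlusN γ (k + 1) z) ≤ b k := by
    rw [Real.dist_eq, abs_sub_comm]
    refine (hC γ (fun j => hbd _ (hγ j)) (fun j => hV _ (hγ j)) z k).trans ?_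
    show _ ≤ (C + max R S + k * A) * (1 / 2) ^ k
    gcongr
  calc |GPlusN γ n z - G γ z| = dist (GPlusN γ n z) (G γ z) := (Real.dist_eq _ _).symm
    _ ≤ ∑' k, b (n + k) := dist_le_tsum_of_dist_le_of_tendsto b hstep hb (hG γ hγ z) n
    _ = ∑' k, b (k + n) := by simp_rw [add_comm]
    _ < ε := hN n hn

end Convergence

theorem stmt_13_general (Γ : Set HenonMap) (hΓ : ParamBounded Γ)
    (R ρ : ℝ) (hA : ∀ h ∈ Γ, CondA h R ρ)
    (G : (ℤ → HenonMap) → (ℂ × ℂ) → ℝ)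
    (hG : ∀ γ : ℤ → HenonMap, (∀ j : ℤ, γ j ∈ Γ) → ∀ z : ℂ × ℂ,
      Filter.Tendsto (fun n : ℕ => GPlusN γ n z) Filter.atTop (nhds (G γ z))) :
    (∀ A : ℝ, R < A →
      ∀ ε : ℝ, 0 < ε → ∃ N : ℕ, ∀ n : ℕ, N ≤ n →
        ∀ γ : ℤ → HenonMap, (∀ j : ℤ, γ j ∈ Γ) →
          ∀ z ∈ {w : ℂ × ℂ | ‖w.1‖ ≤ A} ∩ closure (DDisk R ∪ VMinus R),
            |GPlusN γ n z - G γ z| < ε) ∧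
    (∀ E : Set (ℂ × ℂ), IsCompact E →
      ∀ ε : ℝ, 0 < ε → ∃ N : ℕ, ∀ n : ℕ, N ≤ n →
        ∀ γ : ℤ → HenonMap, (∀ j : ℤ, γ j ∈ Γ) →
          ∀ z ∈ E, |GPlusN γ n z - G γ z| < ε) := by
  obtain ⟨D, A₀, Δ, M, m, hm, hbd⟩ := hΓ.exists_bounds
  have hV : ∀ f ∈ Γ, MapsTo f.toFun (VPlus R) (VPlus R) := fun f hf => (hA f hf).mapsTo_VPlus
  refine ⟨fun A hRA ε hε => ?_, fun E hE ε hε => ?_⟩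
  · obtain ⟨N, hN⟩ := exists_forall_abs_GPlusN_sub_lt hm hbd hV hG A hε
    refine ⟨N, fun n hn γ hγ z ⟨hz₁, hz₂⟩ => hN n hn γ hγ z ?_⟩
    have hz₁ : ‖z.1‖ ≤ A := hz₁
    rw [Prod.norm_def]
    exact max_le hz₁ ((norm_le_of_mem_closure_DDisk_union_VMinus hz₂).trans (max_le hRA.le hz₁))
  · obtain ⟨S, hS⟩ := isBounded_iff_forall_norm_le.mp hE.isBounded
    obtain ⟨N, hN⟩ := exists_forall_abs_GPlusN_sub_lt hm hbd hV hG S hε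
    exact ⟨N, fun n hn γ hγ z hz => hN n hn γ hγ z (hS z hz)⟩

/-- uniform convergence of `G_{γ,n}⁺` to `G_γ⁺` on the sets `C^A`,
uniformly in `γ`; in particular uniform convergence on every compact subset of `ℂ²`. -/
theorem stmt_13 (Γ : Set HenonMap) (hne : Γ.Nonempty) (hΓ : ParamBounded Γ)
    (R ρ : ℝ) (hR : 1 < R) (hρ : 1 < ρ) (hA : ∀ h ∈ Γ, CondA h R ρ)
    (G : (ℤ → HenonMap) → (ℂ × ℂ) → ℝ)
    (hG : ∀ γ : ℤ → HenonMap, (∀ j : ℤ, γ j ∈ Γ) → ∀ z : ℂ × ℂ,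
      Filter.Tendsto (fun n : ℕ => GPlusN γ n z) Filter.atTop (nhds (G γ z))) :
    (∀ A : ℝ, R < A →
      ∀ ε : ℝ, 0 < ε → ∃ N : ℕ, ∀ n : ℕ, N ≤ n →
        ∀ γ : ℤ → HenonMap, (∀ j : ℤ, γ j ∈ Γ) →
          ∀ z ∈ {w : ℂ × ℂ | ‖w.1‖ ≤ A} ∩ closure (DDisk R ∪ VMinus R),
            |GPlusN γ n z - G γ z| < ε) ∧
    (∀ E : Set (ℂ × ℂ), IsCompact E →
      ∀ ε : ℝ, 0 < ε → ∃ N : ℕ, ∀ n : ℕ, N ≤ n →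
        ∀ γ : ℤ → HenonMap, (∀ j : ℤ, γ j ∈ Γ) →
          ∀ z ∈ E, |GPlusN γ n z - G γ z| < ε) :=
  stmt_13_general Γ hΓ R ρ hA G hG
end
end
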